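/- arXiv:1207.2423 — 9 statements merged into one kernel-verified Lean document; each statement's English description precedes it below -/
import Mathlib

section
/- Let G be a finite group generated by two elements g_r and g_u, let c = g_r g_u g_r⁻¹ g_u⁻¹, let H be a subgroup of G containing no nontrivial normal subgroup of G, and let N be the normalizer of H in G. For every irreducible complex representation ρ_α of the quotient group N/H, let ψ_α be the representation of G induced from the inflation of ρ_α to N. Then the codimension of the fixed subspace of ψ_α(c) in the space of ψ_α is never equal to 1. -/
/-!
`T = ψ(c)` has determinant `1` because `c` is a commutator, and `T ^ n = 1` for `n = orderOf c`.
If `range (T - 1)` were a line, `T` would act on it by a scalar and trivially on the quotient by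
it, so the determinant forces that scalar to be `1` and `(T - 1) ^ 2 = 0`. Then
`1 = T ^ n = 1 + n • (T - 1)`, and `T = 1` in characteristic zero, a contradiction.
-/
open Module

/-- A representation is irreducible if the space is nonzero and the only invariant
subspaces are `⊥` and `⊤`. -/
def IsIrreducibleRep {k : Type*} [CommRing k] {Γ : Type*} [Group Γ] {V : Type*}
    [AddCommGroup V] [Module k V] (ρ : Representation k Γ V) : Prop :=
  Nontrivial V ∧ ∀ U : Submodule k V, (∀ γ : Γ, ∀ v ∈ U, ρ γ v ∈ U) → U = ⊥ ∨ U = ⊤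

section Induced

variable {k : Type*} [CommRing k] {G : Type*} [Group G] (N : Subgroup G)
  {V : Type*} [AddCommGroup V] [Module k V]

/-- The space of the representation of `G` induced from a representation `σ` of a
subgroup `N`: functions `f : G → V` with `f (n * g) = σ n (f g)`. -/
def indCarrier (σ : Representation k N V) : Submodule k (G → V) where
  carrier := {f | ∀ (n : N) (g : G), f (↑n * g) = σ n (f g)}
  add_mem' := by
    intro f h hf hh n g
    simp only [Pi.add_apply, hf n g, hh n g, map_add]
  zero_mem' := by
    intro n g
    simp
  smul_mem' := by
    intro a f hf n g
    simp only [Pi.smul_apply, hf n g, map_smul]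

/-- The representation of `G` induced from a representation `σ` of the subgroup `N`,
acting by right translation on `indCarrier N σ`. -/
def indRep (σ : Representation k N V) : Representation k G ↥(indCarrier N σ) where
  toFun x :=
    { toFun := fun f => ⟨fun g => (f : G → V) (g * x), fun n g => by
        simpa [mul_assoc] using f.2 n (g * x)⟩
      map_add' := fun f h => rfl
      map_smul' := fun a f => rfl }
  map_one' := LinearMap.ext fun f => Subtype.ext (funext fun g => by simp)
  map_mul' := fun x y => LinearMap.ext fun f => Subtype.ext (funext fun g => by
    simp [mul_assoc])

end Induced

theorem MonoidHom.map_mul_mul_inv_mul_inv_eq_one {G M : Type*} [Group G] [CommMonoid M]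
    (f : G →* M) (a b : G) : f (a * b * a⁻¹ * b⁻¹) = 1 := by
  rw [← f.coe_toHomUnits, map_mul, map_mul, map_mul, map_inv, map_inv,
    mul_right_comm _ _ (f.toHomUnits a)⁻¹, mul_inv_cancel, one_mul, mul_inv_cancel, Units.val_one]

theorem one_add_pow_of_sq_eq_zero {R : Type*} [Semiring R] {x : R} (hx : x ^ 2 = 0) (n : ℕ) :
    (1 + x) ^ n = 1 + n • x := by
  induction n with
  | zero => simp
  | succ n ih =>
    rw [pow_succ, ih, add_mul, one_mul, mul_add, mul_one, smul_mul_assoc, ← sq, hx, smul_zero,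
      add_zero, succ_nsmul', add_assoc]

namespace LinearMap

variable {K W : Type*} [Field K] [AddCommGroup W] [Module K W]

theorem range_sub_one_le_comap (T : W →ₗ[K] W) : range (T - 1) ≤ (range (T - 1)).comap T :=
  fun x hx => by simpa using add_mem (mem_range_self (T - 1) x) hx

theorem eq_one_of_pow_eq_one_of_sq_sub_one_eq_zero {T : W →ₗ[K] W} {n : ℕ} (hn : (n : K) ≠ 0)
    (hTn : T ^ n = 1) (hT : (T - 1) ^ 2 = 0) : T = 1 := by
  have h : (n : K) • (T - 1) = 0 := by
    rw [Nat.cast_smul_eq_nsmul, ← add_right_inj 1, ← one_add_pow_of_sq_eq_zero hT,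
      add_sub_cancel, hTn, add_zero]
  exact sub_eq_zero.mp ((smul_eq_zero.mp h).resolve_left hn)

variable [FiniteDimensional K W]

theorem det_eq_det_restrict_range_sub_one (T : W →ₗ[K] W) :
    T.det = (T.restrict T.range_sub_one_le_comap).det := by
  have hQ : (range (T - 1)).mapQ (range (T - 1)) T T.range_sub_one_le_comap = id := by
    ext x
    simp [Submodule.Quotient.eq]
  rw [det_eq_det_mul_det (range (T - 1)) T, hQ, det_id, mul_one]

theorem sq_sub_one_eq_zero_of_finrank_range_sub_one_eq_one {T : W →ₗ[K] W}
    (h1 : finrank K (range (T - 1)) = 1) (hdet : T.det = 1) : (T - 1) ^ 2 = 0 := by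
  obtain ⟨ζ, hζ, -⟩ :=
    existsUnique_eq_smul_id_of_finrank_eq_one h1 (T.restrict T.range_sub_one_le_comap)
  obtain rfl : ζ = 1 := by
    rwa [det_eq_det_restrict_range_sub_one, hζ, det_smul, det_id, h1, pow_one, mul_one] at hdet
  ext x
  simpa [sq, sub_eq_zero] using congr(($hζ ⟨(T - 1) x, mem_range_self _ x⟩ : W))

theorem finrank_sub_finrank_ker_sub_one_ne_one {T : W →ₗ[K] W} {n : ℕ} (hn : (n : K) ≠ 0)
    (hTn : T ^ n = 1) (hdet : T.det = 1) :
    finrank K W - finrank K (ker (T - 1)) ≠ 1 := by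
  intro hcodim
  have h1 : finrank K (range (T - 1)) = 1 := by
    have := finrank_range_add_finrank_ker (T - 1)
    omega
  have hT := eq_one_of_pow_eq_one_of_sq_sub_one_eq_zero hn hTn
    (sq_sub_one_eq_zero_of_finrank_range_sub_one_eq_one h1 hdet)
  rw [hT, sub_self, range_zero, finrank_bot] at h1
  exact zero_ne_one h1

end LinearMap

theorem multiplicity_ne_one_of_origami_general
    {G : Type*} [Group G] [Fintype G]
    (g_r g_u : G)
    (c : G) (hc : c = g_r * g_u * g_r⁻¹ * g_u⁻¹)
    (H : Subgroup G)
    {V : Type*} [AddCommGroup V] [Module ℂ V] [FiniteDimensional ℂ V]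
    (ρ : Representation ℂ (↥(Subgroup.normalizer (H : Set G)) ⧸ H.subgroupOf (Subgroup.normalizer (H : Set G))) V) :
    finrank ℂ
        ↥(indCarrier (Subgroup.normalizer (H : Set G)) (ρ.comp (QuotientGroup.mk' (H.subgroupOf (Subgroup.normalizer (H : Set G))))))
      - finrank ℂ
        ↥(LinearMap.ker
          (indRep (Subgroup.normalizer (H : Set G)) (ρ.comp (QuotientGroup.mk' (H.subgroupOf (Subgroup.normalizer (H : Set G))))) c - 1))
      ≠ 1 := by
  set ψ := indRep (Subgroup.normalizer (H : Set G))
    (ρ.comp (QuotientGroup.mk' (H.subgroupOf (Subgroup.normalizer (H : Set G)))))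
  have hdet : LinearMap.det (ψ c) = 1 :=
    hc ▸ (LinearMap.det.comp ψ).map_mul_mul_inv_mul_inv_eq_one g_r g_u
  have hpow : ψ c ^ orderOf c = 1 := by rw [← map_pow, pow_orderOf_eq_one, map_one]
  exact LinearMap.finrank_sub_finrank_ker_sub_one_ne_one
    (Nat.cast_ne_zero.mpr (orderOf_pos c).ne') hpow hdet

/-- **Origamis: the multiplicity is never 1** (Matheus–Yoccoz–Zmiaikou, Theorem 1.2).
For origami data `(G, g_r, g_u, H)` — `G` a finite group generated by `g_r, g_u`,
`H` a core-free subgroup, `N` the normalizer of `H` in `G`,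
`c = g_r g_u g_r⁻¹ g_u⁻¹` — and any irreducible complex representation `ρ` of `N/H`,
the codimension of the fixed subspace of `ψ_α(c)`, where `ψ_α` is the representation
of `G` induced from the inflation of `ρ` to `N`, is never equal to `1`. -/
theorem multiplicity_ne_one_of_origami
    {G : Type*} [Group G] [Fintype G]
    (g_r g_u : G) (hgen : Subgroup.closure ({g_r, g_u} : Set G) = ⊤)
    (c : G) (hc : c = g_r * g_u * g_r⁻¹ * g_u⁻¹)
    (H : Subgroup G)
    (hcorefree : ∀ K : Subgroup G, K ≤ H → K.Normal → K = ⊥)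
    {V : Type*} [AddCommGroup V] [Module ℂ V] [FiniteDimensional ℂ V]
    (ρ : Representation ℂ (↥(Subgroup.normalizer (H : Set G)) ⧸ H.subgroupOf (Subgroup.normalizer (H : Set G))) V)
    (hρ : IsIrreducibleRep ρ) :
    finrank ℂ
        ↥(indCarrier (Subgroup.normalizer (H : Set G)) (ρ.comp (QuotientGroup.mk' (H.subgroupOf (Subgroup.normalizer (H : Set G))))))
      - finrank ℂ
        ↥(LinearMap.ker
          (indRep (Subgroup.normalizer (H : Set G)) (ρ.comp (QuotientGroup.mk' (H.subgroupOf (Subgroup.normalizer (H : Set G))))) c - 1))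
      ≠ 1 :=
  multiplicity_ne_one_of_origami_general g_r g_u c hc H ρ
end

section
/- Let G be a finite group generated by two elements g_r and g_u, let c = g_r g_u g_r⁻¹ g_u⁻¹, let H be a subgroup of G containing no nontrivial normal subgroup of G, and let N be the normalizer of H in G. Then every conjugate g c g⁻¹ (g ∈ G) lies in N if and only if N is a normal subgroup of G and the quotient group G/N is abelian. -/
/-!
Since `G` is generated by `g_r` and `g_u`, the normal closure of `c = ⁅g_r, g_u⁆` is the whole
commutator subgroup: modulo it the two generators commute, so the quotient is abelian. Hence both
sides say that the normalizer contains `⁅G, G⁆`, and a subgroup containing `⁅G, G⁆` is normal.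
-/

open Subgroup

section

variable {G : Type*} [Group G]

theorem Subgroup.normalClosure_singleton_le_iff {x : G} {N : Subgroup G} :
    normalClosure {x} ≤ N ↔ ∀ g : G, g * x * g⁻¹ ∈ N := by
  simp only [normalClosure, closure_le, Set.subset_def, Group.mem_conjugatesOfSet_iff,
    Set.mem_singleton_iff, exists_eq_left, isConj_iff, forall_exists_index, SetLike.mem_coe]
  exact ⟨fun h g => h _ g rfl, fun h _ g hg => hg ▸ h g⟩

theorem commutator_le_iff_normal_and_forall_commutator_mem {N : Subgroup G} :
    commutator G ≤ N ↔ N.Normal ∧ ∀ a b : G, a * b * a⁻¹ * b⁻¹ ∈ N := by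
  refine ⟨fun h => ⟨.of_commutator_le _ h, fun a b => h ?_⟩, fun ⟨_, h⟩ => ?_⟩
  · exact commutator_mem_commutator (mem_top a) (mem_top b)
  · rw [commutator_eq_normalClosure]
    refine normalClosure_le_normal ?_
    rintro _ ⟨a, b, rfl⟩
    exact h a b

theorem commutator_eq_bot_of_closure_pair_eq_top {x y : G} (hgen : closure {x, y} = ⊤)
    (hxy : Commute x y) : commutator G = ⊥ := by
  have hcent : ∀ g ∈ ({x, y} : Set G), centralizer {g} = ⊤ := by
    rintro g hg
    rw [eq_top_iff, ← hgen, closure_le]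
    rintro z (rfl | rfl) <;> rcases hg with rfl | rfl <;>
      simp only [SetLike.mem_coe, mem_centralizer_singleton_iff, hxy.eq]
  rw [commutator_eq_bot_iff_center_eq_top, center_eq_iInf hgen]
  simpa only [iInf_eq_top] using hcent

theorem commutator_le_of_closure_pair_eq_top {a b : G} (hgen : closure {a, b} = ⊤)
    {K : Subgroup G} [K.Normal] (hab : a * b * a⁻¹ * b⁻¹ ∈ K) : commutator G ≤ K := by
  set f := QuotientGroup.mk' K
  have hsurj : Function.Surjective f := QuotientGroup.mk'_surjective K
  have hgen' : closure {f a, f b} = ⊤ := by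
    rw [← Set.image_pair, ← MonoidHom.map_closure, hgen, map_top_of_surjective f hsurj]
  have hcomm : Commute (f a) (f b) := by
    have hab' : f (a * b * a⁻¹ * b⁻¹) = 1 := (QuotientGroup.eq_one_iff _).2 hab
    rw [commute_iff_eq, ← mul_inv_eq_one, mul_inv_rev, ← mul_assoc]
    simpa only [map_mul, map_inv] using hab'
  have hQ : commutator (G ⧸ K) = ⊥ := commutator_eq_bot_of_closure_pair_eq_top hgen' hcomm
  rw [← QuotientGroup.ker_mk' K, ← Subgroup.map_eq_bot_iff, commutator_def, map_commutator,
    map_top_of_surjective f hsurj, ← commutator_def, hQ]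

theorem normalClosure_commutator_eq_commutator_of_closure_pair_eq_top {a b : G}
    (hgen : closure {a, b} = ⊤) : normalClosure {a * b * a⁻¹ * b⁻¹} = commutator G :=
  le_antisymm
    (normalClosure_le_normal <| Set.singleton_subset_iff.2 <|
      commutator_mem_commutator (mem_top a) (mem_top b))
    (commutator_le_of_closure_pair_eq_top hgen <| subset_normalClosure rfl)

end

theorem quasiregular_iff_normalizer_normal_abelian_quotient_general
    {G : Type*} [Group G]
    (g_r g_u : G) (hgen : Subgroup.closure ({g_r, g_u} : Set G) = ⊤)
    (c : G) (hc : c = g_r * g_u * g_r⁻¹ * g_u⁻¹)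
    (H : Subgroup G) :
    (∀ g : G, g * c * g⁻¹ ∈ Subgroup.normalizer (H : Set G)) ↔
      ((Subgroup.normalizer (H : Set G)).Normal ∧ ∀ a b : G, a * b * a⁻¹ * b⁻¹ ∈ Subgroup.normalizer (H : Set G)) := by
  rw [← normalClosure_singleton_le_iff, ← commutator_le_iff_normal_and_forall_commutator_mem, hc,
    normalClosure_commutator_eq_commutator_of_closure_pair_eq_top hgen]

/-- **Characterization of quasiregular origamis** (Matheus–Yoccoz–Zmiaikou,
Theorem 1.3 / Proposition 3.13). Let `G` be a finite group generated by `g_r, g_u`,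
let `c = g_r g_u g_r⁻¹ g_u⁻¹`, let `H` be a subgroup of `G` containing no nontrivial
normal subgroup of `G`, and let `N` be the normalizer of `H` in `G`. Then every
conjugate `g c g⁻¹` lies in `N` if and only if `N` is a normal subgroup of `G` and
the quotient `G/N` is abelian (i.e. all commutators of `G` lie in `N`). -/
theorem quasiregular_iff_normalizer_normal_abelian_quotient
    {G : Type*} [Group G] [Fintype G]
    (g_r g_u : G) (hgen : Subgroup.closure ({g_r, g_u} : Set G) = ⊤)
    (c : G) (hc : c = g_r * g_u * g_r⁻¹ * g_u⁻¹)
    (H : Subgroup G)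
    (hcorefree : ∀ K : Subgroup G, K ≤ H → K.Normal → K = ⊥) :
    (∀ g : G, g * c * g⁻¹ ∈ Subgroup.normalizer (H : Set G)) ↔
      ((Subgroup.normalizer (H : Set G)).Normal ∧ ∀ a b : G, a * b * a⁻¹ * b⁻¹ ∈ Subgroup.normalizer (H : Set G)) :=
  quasiregular_iff_normalizer_normal_abelian_quotient_general g_r g_u hgen c hc H
end

section
/- Let G be a finite group, H a subgroup of G with normalizer N, and c ∈ G of order κ. Let Σ* be the set of orbits of the action of H × ⟨c⟩ on G given by (h, c^m)·g = h g c^{-m}, write A_g ∈ Σ* for the orbit of g ∈ G, and let N act on Σ* by left multiplication. For g ∈ G, let n(g) (respectively h(g)) be the least positive integer n such that g c^n g⁻¹ belongs to N (respectively to H). Then: (i) n(g) divides h(g) and h(g) divides κ; (ii) the stabilizer of A_g in N equals N ∩ H⟨g c g⁻¹⟩ = H·(N ∩ ⟨g c g⁻¹⟩), and its image in N/H is cyclic of order h(g)/n(g); (iii) the N-orbit of A_g in Σ* has cardinality (n(g)/h(g))·#(N/H); (iv) the number of elements g' ∈ G such that A_{g'} belongs to the N-orbit of A_g equals n(g)·#N.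 -/
/-!
Put `y = g c g⁻¹`. Since `g c^m g⁻¹ = y^m`, for a subgroup `K` the condition `g c^m g⁻¹ ∈ K` says
that `y^m` fixes the base point of `G ⧸ K`; hence `n g` and `h g` are the periods of `y` at the
base points of `G ⧸ N` and `G ⧸ H`, and `y^m ∈ N` (resp. `∈ H`) iff `n g ∣ m` (resp. `h g ∣ m`).

An element `x ∈ N` fixes `A_g` iff `x ∈ H⟨y⟩`, iff `x ∈ H⟨y^(n g)⟩`. So the stabilizer of `A_g`
is the preimage in `N` of the cyclic subgroup of `N/H` generated by the class of `y^(n g)`, whose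
order is `h g / n g`; orbit–stabilizer gives (iii). Finally `A_{g'}` lies in the orbit of `A_g`
iff `g g'⁻¹ ∈ ⟨y⟩N`, and `#(⟨y⟩N) = #N · n g` because the `⟨y⟩`-orbit of the base point of
`G ⧸ N` has length `n g`.
-/

open scoped Pointwise

/-- The relation on `G` whose classes are the orbits of the action of `H × ⟨c⟩` on
`G` given by `(h, c^m) · g = h g c^(-m)`; the set `Σ*` of vertices of the origami is
the quotient `Quot (vertexRel H c)`, and `A_g` is the class `Quot.mk _ g`. -/
def vertexRel {G : Type*} [Group G] (H : Subgroup G) (c : G) : G → G → Prop :=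
  fun x y => ∃ h ∈ H, ∃ m : ℤ, y = h * x * c ^ m

open Subgroup MulAction

section Period

variable {G : Type*} [Group G] (K : Subgroup G) (y : G)

theorem zpow_smul_coe_one_eq_iff_mem (m : ℤ) :
    y ^ m • ((1 : G) : G ⧸ K) = (1 : G) ↔ y ^ m ∈ K := by
  rw [MulAction.Quotient.smul_coe, QuotientGroup.eq]
  simp only [smul_eq_mul, mul_one, inv_mem_iff]

theorem zpow_mem_iff_period_dvd (m : ℤ) :
    y ^ m ∈ K ↔ (period y ((1 : G) : G ⧸ K) : ℤ) ∣ m := by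
  rw [← zpow_smul_coe_one_eq_iff_mem, zpow_smul_eq_iff_period_dvd]

theorem period_coe_one_eq_of_minimal {d : ℕ} (hd : 0 < d) (hy : y ^ d ∈ K)
    (hmin : ∀ m : ℕ, 0 < m → y ^ m ∈ K → d ≤ m) : period y ((1 : G) : G ⧸ K) = d := by
  have fixed (m : ℕ) : y ^ m • ((1 : G) : G ⧸ K) = (1 : G) ↔ y ^ m ∈ K := by
    exact_mod_cast zpow_smul_coe_one_eq_iff_mem K y m
  refine le_antisymm (period_le_of_fixed hd ((fixed d).mpr hy)) (hmin _ ?_ ?_)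
  · exact period_pos_of_fixed hd ((fixed d).mpr hy)
  · exact (fixed _).mp (pow_period_smul y _)

theorem zpow_mem_iff_dvd_of_minimal {d : ℕ} (hd : 0 < d) (hy : y ^ d ∈ K)
    (hmin : ∀ m : ℕ, 0 < m → y ^ m ∈ K → d ≤ m) (m : ℤ) : y ^ m ∈ K ↔ (d : ℤ) ∣ m := by
  rw [zpow_mem_iff_period_dvd, period_coe_one_eq_of_minimal K y hd hy hmin]

theorem natCard_zpowers_mul :
    Nat.card ((zpowers y : Set G) * K : Set G) = Nat.card K * period y ((1 : G) : G ⧸ K) := by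
  have smul_one (z : zpowers y) : z • ((1 : G) : G ⧸ K) = (z : G) := by
    change (z : G) • ((1 : G) : G ⧸ K) = _
    rw [MulAction.Quotient.smul_coe, smul_eq_mul, mul_one]
  have himage : (zpowers y : Set G).image ((↑) : G → G ⧸ K) =
      orbit (zpowers y) ((1 : G) : G ⧸ K) := by
    ext q
    constructor
    · rintro ⟨z, hz, rfl⟩
      exact ⟨⟨z, hz⟩, smul_one _⟩
    · rintro ⟨z, rfl⟩
      exact ⟨z, z.2, (smul_one z).symm⟩
  rw [card_mul_eq_card_subgroup_mul_card_quotient, himage]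
  exact congrArg _ ((Nat.card_congr (orbitZPowersEquiv y _)).trans (Nat.card_zmod _))

end Period

theorem natCard_orbit_mul_orderOf {Γ X : Type*} [Group Γ] [MulAction Γ X] {K : Subgroup Γ}
    [K.Normal] {x : X} {q : Γ ⧸ K}
    (hx : stabilizer Γ x = (zpowers q).comap (QuotientGroup.mk' K)) :
    Nat.card (orbit Γ x) * orderOf q = Nat.card (Γ ⧸ K) := by
  rw [Nat.card_coe_set_eq, ← index_stabilizer, hx,
    index_comap_of_surjective _ (QuotientGroup.mk'_surjective K), ← Nat.card_zpowers,
    index_mul_card]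

section Normalizer

variable {G : Type*} [Group G] {H : Subgroup G} {y : G} {d : ℕ}
  {w : normalizer (H : Set G)}

theorem coe_mem_mul_zpowers_iff (hN : ∀ m : ℤ, y ^ m ∈ normalizer (H : Set G) → (d : ℤ) ∣ m)
    (hw : (w : G) = y ^ d) (x : normalizer (H : Set G)) :
    (x : G) ∈ (H : Set G) * (zpowers y : Set G) ↔
      (x : normalizer (H : Set G) ⧸ H.subgroupOf (normalizer (H : Set G))) ∈
        zpowers (w : normalizer (H : Set G) ⧸ H.subgroupOf (normalizer (H : Set G))) := by
  have coe_zpow (k : ℤ) : ((w ^ k : normalizer (H : Set G)) : G) = y ^ (d * k) := by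
    rw [coe_zpow, hw, zpow_mul, zpow_natCast]
  rw [mem_zpowers_iff]
  constructor
  · rintro ⟨a, ha, _, ⟨m, rfl⟩, hx⟩
    dsimp only at hx
    have hm : y ^ m ∈ normalizer (H : Set G) := by
      rw [show y ^ m = a⁻¹ * x by rw [← hx, inv_mul_cancel_left]]
      exact mul_mem (inv_mem (le_normalizer ha)) x.2
    obtain ⟨k, rfl⟩ := hN m hm
    refine ⟨k, ?_⟩
    rw [← QuotientGroup.mk_zpow, eq_comm, QuotientGroup.eq_iff_div_mem, mem_subgroupOf, coe_div,
      coe_zpow, ← hx, mul_div_cancel_right]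
    exact ha
  · rintro ⟨k, hk⟩
    rw [← QuotientGroup.mk_zpow, eq_comm, QuotientGroup.eq_iff_div_mem, mem_subgroupOf,
      coe_div] at hk
    exact ⟨_, hk, _, ⟨d * k, (coe_zpow k).symm⟩, div_mul_cancel _ _⟩

theorem orderOf_mk_eq_div {e : ℕ} (hH : ∀ m : ℤ, y ^ m ∈ H ↔ (e : ℤ) ∣ m) (hd : 0 < d)
    (hde : d ∣ e) (hw : (w : G) = y ^ d) :
    orderOf (w : normalizer (H : Set G) ⧸ H.subgroupOf (normalizer (H : Set G))) = e / d := by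
  refine Nat.dvd_right_iff_eq.mp fun k => ?_
  obtain ⟨f, rfl⟩ := hde
  rw [orderOf_dvd_iff_pow_eq_one, ← QuotientGroup.mk_pow, QuotientGroup.eq_one_iff,
    mem_subgroupOf, coe_pow, hw, ← pow_mul, ← zpow_natCast, hH, Int.natCast_dvd_natCast,
    Nat.mul_div_cancel_left _ hd, Nat.mul_dvd_mul_iff_left hd]

end Normalizer

section VertexAction

variable {G : Type*} [Group G] {H : Subgroup G} {c : G}

theorem vertexRel_equivalence (H : Subgroup G) (c : G) : Equivalence (vertexRel H c) where
  refl x := ⟨1, one_mem H, 0, by simp⟩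
  symm := by
    rintro x y ⟨a, ha, m, rfl⟩
    exact ⟨a⁻¹, inv_mem ha, -m, by group⟩
  trans := by
    rintro x y z ⟨a, ha, m, rfl⟩ ⟨b, hb, m', rfl⟩
    exact ⟨b * a, mul_mem hb ha, m + m', by rw [zpow_add]; group⟩

theorem mk_vertexRel_eq_iff {x x' : G} :
    Quot.mk (vertexRel H c) x = Quot.mk (vertexRel H c) x' ↔ vertexRel H c x x' :=
  Quot.eq.trans (vertexRel_equivalence H c).eqvGen_iff

theorem mk_vertexRel_mul_eq_iff (x g : G) :
    Quot.mk (vertexRel H c) (x * g) = Quot.mk (vertexRel H c) g ↔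
      x ∈ (H : Set G) * (zpowers (g * c * g⁻¹) : Set G) := by
  rw [eq_comm, mk_vertexRel_eq_iff]
  constructor
  · rintro ⟨a, ha, m, hx⟩
    refine ⟨a, ha, _, ⟨m, rfl⟩, ?_⟩
    dsimp only
    rw [conj_zpow, eq_mul_inv_of_mul_eq hx]
    group
  · rintro ⟨a, ha, _, ⟨m, rfl⟩, rfl⟩
    exact ⟨a, ha, m, by dsimp only; rw [conj_zpow]; group⟩

instance : MulAction (normalizer (H : Set G)) (Quot (vertexRel H c)) where
  smul x := Quot.map ((x : G) * ·) fun _ _ ⟨a, ha, m, hb⟩ =>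
    ⟨x * a * (x : G)⁻¹, (mem_normalizer_iff.mp x.2 a).mp ha, m, by rw [hb]; group⟩
  one_smul q := Quot.inductionOn q fun _ => congrArg _ (one_mul _)
  mul_smul _ _ q := Quot.inductionOn q fun _ => congrArg _ (mul_assoc _ _ _)

theorem normalizer_smul_mk (x : normalizer (H : Set G)) (g : G) :
    x • Quot.mk (vertexRel H c) g = Quot.mk (vertexRel H c) (x * g) :=
  rfl

theorem stabilizer_mk_eq_comap {g : G} {d : ℕ}
    (hN : ∀ m : ℤ, (g * c * g⁻¹) ^ m ∈ normalizer (H : Set G) → (d : ℤ) ∣ m)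
    {w : normalizer (H : Set G)} (hw : (w : G) = (g * c * g⁻¹) ^ d) :
    stabilizer (normalizer (H : Set G)) (Quot.mk (vertexRel H c) g) =
      (zpowers (w : normalizer (H : Set G) ⧸ H.subgroupOf (normalizer (H : Set G)))).comap
        (QuotientGroup.mk' _) := by
  ext x
  rw [mem_stabilizer_iff, normalizer_smul_mk, mk_vertexRel_mul_eq_iff, mem_comap,
    QuotientGroup.mk'_apply]
  exact coe_mem_mul_zpowers_iff hN hw x

theorem orbit_mk_eq (g : G) :
    orbit (normalizer (H : Set G)) (Quot.mk (vertexRel H c) g) =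
      {q | ∃ x ∈ normalizer (H : Set G), q = Quot.mk (vertexRel H c) (x * g)} := by
  ext q
  exact ⟨fun ⟨x, hq⟩ => ⟨x, x.2, hq.symm⟩, fun ⟨x, hx, hq⟩ => ⟨⟨x, hx⟩, hq.symm⟩⟩

theorem setOf_mem_normalizer_and_mk_mul_eq (g : G) :
    {x : G | x ∈ normalizer (H : Set G) ∧
        Quot.mk (vertexRel H c) (x * g) = Quot.mk (vertexRel H c) g} =
      (normalizer (H : Set G) : Set G) ∩ ((H : Set G) * (zpowers (g * c * g⁻¹) : Set G)) :=
  Set.ext fun x => and_congr_right fun _ => mk_vertexRel_mul_eq_iff x g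

theorem image_mk_stabilizer_eq_zpowers {g : G} {d : ℕ}
    (hN : ∀ m : ℤ, (g * c * g⁻¹) ^ m ∈ normalizer (H : Set G) → (d : ℤ) ∣ m)
    {w : normalizer (H : Set G)} (hw : (w : G) = (g * c * g⁻¹) ^ d) :
    QuotientGroup.mk (s := H.subgroupOf (normalizer (H : Set G))) '' {x |
        Quot.mk (vertexRel H c) ((x : G) * g) = Quot.mk (vertexRel H c) g} =
      zpowers (w : normalizer (H : Set G) ⧸ H.subgroupOf (normalizer (H : Set G))) := by
  change QuotientGroup.mk '' (stabilizer (normalizer (H : Set G))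
    (Quot.mk (vertexRel H c) g) : Set (normalizer (H : Set G))) = _
  rw [stabilizer_mk_eq_comap hN hw, coe_comap, QuotientGroup.coe_mk',
    Set.image_preimage_eq _ QuotientGroup.mk_surjective]

theorem mk_mem_orbit_iff (g g' : G) :
    Quot.mk (vertexRel H c) g' ∈ orbit (normalizer (H : Set G)) (Quot.mk (vertexRel H c) g) ↔
      g * g'⁻¹ ∈ (zpowers (g * c * g⁻¹) : Set G) * normalizer (H : Set G) := by
  simp only [mem_orbit_iff, normalizer_smul_mk, mk_vertexRel_eq_iff, Subtype.exists]
  constructor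
  · rintro ⟨x, hx, a, ha, m, rfl⟩
    refine ⟨_, ⟨-m, rfl⟩, (a * x)⁻¹, inv_mem (mul_mem (le_normalizer ha) hx), ?_⟩
    dsimp only
    rw [conj_zpow]
    group
  · rintro ⟨_, ⟨m, rfl⟩, u, hu, hgg'⟩
    refine ⟨u⁻¹, inv_mem hu, 1, one_mem H, -m, ?_⟩
    dsimp only at hgg'
    rw [conj_zpow] at hgg'
    rw [show g' = (g⁻¹ * (g * g'⁻¹))⁻¹ by group, ← hgg']
    group

theorem natCard_mk_mem_orbit (g : G) :
    Nat.card {g' : G // Quot.mk (vertexRel H c) g' ∈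
        orbit (normalizer (H : Set G)) (Quot.mk (vertexRel H c) g)} =
      Nat.card (normalizer (H : Set G)) *
        period (g * c * g⁻¹) ((1 : G) : G ⧸ normalizer (H : Set G)) := by
  rw [← natCard_zpowers_mul]
  exact Nat.card_congr (((Equiv.inv G).trans (Equiv.mulLeft g)).subtypeEquiv
    fun g' => mk_mem_orbit_iff g g')

end VertexAction

theorem orbits_and_stabilizers_of_vertex_action_general
    {G : Type*} [Group G]
    (H : Subgroup G) (c : G)
    (n h : G → ℕ)
    (hn : ∀ g : G, 0 < n g ∧ g * c ^ n g * g⁻¹ ∈ (Subgroup.normalizer (H : Set G)) ∧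
      ∀ m : ℕ, 0 < m → g * c ^ m * g⁻¹ ∈ (Subgroup.normalizer (H : Set G)) → n g ≤ m)
    (hh : ∀ g : G, 0 < h g ∧ g * c ^ h g * g⁻¹ ∈ H ∧
      ∀ m : ℕ, 0 < m → g * c ^ m * g⁻¹ ∈ H → h g ≤ m)
    (g : G)
    -- the stabilizer of `A_g` for the left action of `N` on `Σ*`, as a subset of `G`
    (Stab : Set G)
    (hStab : Stab = {x : G | x ∈ (Subgroup.normalizer (H : Set G)) ∧
      Quot.mk (vertexRel H c) (x * g) = Quot.mk (vertexRel H c) g})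
    -- its image in `N/H`
    (StabQ : Set (↥(Subgroup.normalizer (H : Set G)) ⧸ H.subgroupOf (Subgroup.normalizer (H : Set G))))
    (hStabQ : StabQ = QuotientGroup.mk ''
      {x : ↥(Subgroup.normalizer (H : Set G)) |
        Quot.mk (vertexRel H c) ((x : G) * g) = Quot.mk (vertexRel H c) g})
    -- the orbit of `A_g` under the left action of `N` on `Σ*`
    (Orb : Set (Quot (vertexRel H c)))
    (hOrb : Orb = {q | ∃ x ∈ (Subgroup.normalizer (H : Set G)), q = Quot.mk (vertexRel H c) (x * g)}) :
    -- (i)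
    n g ∣ h g ∧ h g ∣ orderOf c ∧
    -- (ii)
    Stab = ((Subgroup.normalizer (H : Set G)) : Set G) ∩
      ((H : Set G) * (Subgroup.zpowers (g * c * g⁻¹) : Set G)) ∧
    Stab = (H : Set G) *
      (((Subgroup.normalizer (H : Set G)) : Set G) ∩ (Subgroup.zpowers (g * c * g⁻¹) : Set G)) ∧
    StabQ = ↑(Subgroup.zpowers
      (QuotientGroup.mk (⟨g * c ^ n g * g⁻¹, (hn g).2.1⟩ : ↥(Subgroup.normalizer (H : Set G))) :
        ↥(Subgroup.normalizer (H : Set G)) ⧸ H.subgroupOf (Subgroup.normalizer (H : Set G)))) ∧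
    Nat.card ↥StabQ = h g / n g ∧
    -- (iii)
    Nat.card ↥Orb * h g
      = n g * Nat.card (↥(Subgroup.normalizer (H : Set G)) ⧸ H.subgroupOf (Subgroup.normalizer (H : Set G))) ∧
    -- (iv)
    Nat.card {g' : G // Quot.mk (vertexRel H c) g' ∈ Orb}
      = n g * Nat.card ↥(Subgroup.normalizer (H : Set G)) := by
  subst hStab hStabQ hOrb
  obtain ⟨hn0, hnN, hnmin⟩ := hn g
  obtain ⟨hh0, hhH, hhmin⟩ := hh g
  simp only [← conj_pow] at hnN hnmin hhH hhmin
  have memN := zpow_mem_iff_dvd_of_minimal _ _ hn0 hnN hnmin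
  have memH := zpow_mem_iff_dvd_of_minimal _ _ hh0 hhH hhmin
  have hnh : n g ∣ h g := by
    refine Int.natCast_dvd_natCast.mp ((memN _).mp ?_)
    rw [zpow_natCast]
    exact le_normalizer hhH
  have hhc : h g ∣ orderOf c := by
    refine Int.natCast_dvd_natCast.mp ((memH _).mp ?_)
    rw [zpow_natCast, conj_pow, pow_orderOf_eq_one, mul_one, mul_inv_cancel]
    exact one_mem H
  have hw : ((⟨_, (hn g).2.1⟩ : normalizer (H : Set G)) : G) = (g * c * g⁻¹) ^ n g :=
    conj_pow.symm
  have hstab := stabilizer_mk_eq_comap (c := c) (fun m => (memN m).mp) hw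
  have horder := orderOf_mk_eq_div memH hn0 hnh hw
  rw [← orbit_mk_eq, setOf_mem_normalizer_and_mk_mul_eq,
    image_mk_stabilizer_eq_zpowers (fun m => (memN m).mp) hw]
  refine ⟨hnh, hhc, rfl, ?_, rfl, ?_, ?_, ?_⟩
  · rw [Set.inter_comm, ← mul_inf_assoc _ _ _ le_normalizer, coe_inf, Set.inter_comm]
  · rw [SetLike.coe_sort_coe, Nat.card_zpowers, horder]
  · rw [← Nat.div_mul_cancel hnh, ← natCard_orbit_mul_orderOf hstab, horder]
    ring
  · rw [natCard_mk_mem_orbit, period_coe_one_eq_of_minimal _ _ hn0 hnN hnmin, mul_comm]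

/-- **Orbits and stabilizers of the action of `N` on `Σ*`**
(Matheus–Yoccoz–Zmiaikou, Proposition 3.1 and formula (3.1)). Let `G` be a finite
group, `H` a subgroup with normalizer `N`, `c ∈ G` of order `κ = orderOf c`. Let
`Σ*` be the set of orbits of the action `(h, c^m) · g = h g c^(-m)` of `H × ⟨c⟩` on
`G`, write `A_g` for the orbit of `g`, and let `N` act on `Σ*` by left
multiplication. Let `n g` (resp. `h g`) be the least positive integer `n` such that
`g c^n g⁻¹ ∈ N` (resp. `∈ H`). Then:
(i) `n g ∣ h g` and `h g ∣ κ`;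
(ii) the stabilizer of `A_g` in `N` equals `N ∩ H⟨g c g⁻¹⟩ = H (N ∩ ⟨g c g⁻¹⟩)`,
and its image in `N/H` is the cyclic subgroup generated by the class of
`g c^(n g) g⁻¹`, of order `h g / n g`;
(iii) the `N`-orbit of `A_g` has cardinality `(n g / h g) · #(N/H)`;
(iv) the number of `g' ∈ G` with `A_{g'}` in the `N`-orbit of `A_g` is
`n g · #N`. -/
theorem orbits_and_stabilizers_of_vertex_action
    {G : Type*} [Group G] [Finite G]
    (H : Subgroup G) (c : G)
    (n h : G → ℕ)
    (hn : ∀ g : G, 0 < n g ∧ g * c ^ n g * g⁻¹ ∈ (Subgroup.normalizer (H : Set G)) ∧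
      ∀ m : ℕ, 0 < m → g * c ^ m * g⁻¹ ∈ (Subgroup.normalizer (H : Set G)) → n g ≤ m)
    (hh : ∀ g : G, 0 < h g ∧ g * c ^ h g * g⁻¹ ∈ H ∧
      ∀ m : ℕ, 0 < m → g * c ^ m * g⁻¹ ∈ H → h g ≤ m)
    (g : G)
    -- the stabilizer of `A_g` for the left action of `N` on `Σ*`, as a subset of `G`
    (Stab : Set G)
    (hStab : Stab = {x : G | x ∈ (Subgroup.normalizer (H : Set G)) ∧
      Quot.mk (vertexRel H c) (x * g) = Quot.mk (vertexRel H c) g})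
    -- its image in `N/H`
    (StabQ : Set (↥(Subgroup.normalizer (H : Set G)) ⧸ H.subgroupOf (Subgroup.normalizer (H : Set G))))
    (hStabQ : StabQ = QuotientGroup.mk ''
      {x : ↥(Subgroup.normalizer (H : Set G)) |
        Quot.mk (vertexRel H c) ((x : G) * g) = Quot.mk (vertexRel H c) g})
    -- the orbit of `A_g` under the left action of `N` on `Σ*`
    (Orb : Set (Quot (vertexRel H c)))
    (hOrb : Orb = {q | ∃ x ∈ (Subgroup.normalizer (H : Set G)), q = Quot.mk (vertexRel H c) (x * g)}) :
    -- (i)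
    n g ∣ h g ∧ h g ∣ orderOf c ∧
    -- (ii)
    Stab = ((Subgroup.normalizer (H : Set G)) : Set G) ∩
      ((H : Set G) * (Subgroup.zpowers (g * c * g⁻¹) : Set G)) ∧
    Stab = (H : Set G) *
      (((Subgroup.normalizer (H : Set G)) : Set G) ∩ (Subgroup.zpowers (g * c * g⁻¹) : Set G)) ∧
    StabQ = ↑(Subgroup.zpowers
      (QuotientGroup.mk (⟨g * c ^ n g * g⁻¹, (hn g).2.1⟩ : ↥(Subgroup.normalizer (H : Set G))) :
        ↥(Subgroup.normalizer (H : Set G)) ⧸ H.subgroupOf (Subgroup.normalizer (H : Set G)))) ∧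
    Nat.card ↥StabQ = h g / n g ∧
    -- (iii)
    Nat.card ↥Orb * h g
      = n g * Nat.card (↥(Subgroup.normalizer (H : Set G)) ⧸ H.subgroupOf (Subgroup.normalizer (H : Set G))) ∧
    -- (iv)
    Nat.card {g' : G // Quot.mk (vertexRel H c) g' ∈ Orb}
      = n g * Nat.card ↥(Subgroup.normalizer (H : Set G)) :=
  orbits_and_stabilizers_of_vertex_action_general H c n h hn hh g Stab hStab StabQ hStabQ Orb hOrb
end

section
/- Let G be a finite group, N a subgroup, H a normal subgroup of N, and c ∈ G. For an irreducible complex representation ρ_α of N/H, let ψ_α be the representation of G induced from the inflation of ρ_α to N, and let ℓ_α denote the codimension of the fixed subspace of ψ_α(c). Let ℓ_0 = [G:N] − (number of orbits of the permutation of the coset space G/N induced by c), which is the value of ℓ_α for the trivial representation. Then ℓ_α ≥ ℓ_0 for every irreducible complex representation ρ_α of N/H. -/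
open Module

/-! An element of the induced representation is determined by its values at representatives
of the right cosets `N g`, and these values can be prescribed freely in `V`; hence
`dim ψ ≥ [G : N] · dim V`. A vector fixed by `ψ c` is moreover invariant under
`g ↦ g * c ^ m`, so it is determined by its values at one representative per `⟨c⟩`-orbit on
`G ⧸ N`, and the fixed space has dimension at most `#orbits · dim V`. Hence
`ℓ_α ≥ ([G : N] - #orbits) · dim V ≥ ℓ₀`, as `dim V ≥ 1`. -/

theorem Representation.apply_zpow_eq_self {k G V : Type*} [CommSemiring k] [Group G]
    [AddCommMonoid V] [Module k V] (ρ : Representation k G V) {g : G} {v : V}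
    (h : ρ g v = v) (m : ℤ) : ρ (g ^ m) v = v :=
  -- `{g | ρ g v = v}` is a subgroup: the stabilizer of `v` in the units, pulled back along `ρ`
  have hg : g ∈ (MulAction.stabilizer (V →ₗ[k] V)ˣ v).comap ρ.asGroupHom := h
  zpow_mem hg m

theorem equivalence_exists_zpow_smul {G α : Type*} [Group G] [MulAction G α] (c : G) :
    Equivalence (fun x y : α => ∃ m : ℤ, y = c ^ m • x) where
  refl x := ⟨0, by simp⟩
  symm := by
    rintro x _ ⟨m, rfl⟩
    exact ⟨-m, by simp [← mul_smul]⟩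
  trans := by
    rintro x _ _ ⟨m, rfl⟩ ⟨m', rfl⟩
    exact ⟨m' + m, by simp [← mul_smul, ← zpow_add]⟩

theorem Module.finrank_fun {k ι V : Type*} [Field k] [Finite ι] [AddCommGroup V] [Module k V]
    [FiniteDimensional k V] : finrank k (ι → V) = Nat.card ι * finrank k V := by
  have := Fintype.ofFinite ι
  simp [Module.finrank_pi_fintype, Nat.card_eq_fintype_card]

namespace QuotientGroup

variable {G : Type*} [Group G] {N : Subgroup G}

theorem mk_inv_subgroup_mul (n : N) (g : G) :
    (((↑n * g)⁻¹ : G) : G ⧸ N) = ((g⁻¹ : G) : G ⧸ N) := by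
  rw [mul_inv_rev]
  exact mk_mul_of_mem _ (inv_mem n.2)

variable (N) in
/-- The factor `n ∈ N` in `g = n * x.out⁻¹`, where `x = g⁻¹ N`: the right coset `N g` is
represented by `x.out⁻¹`. -/
noncomputable def cosetFactor (g : G) : N :=
  ⟨g * ((g⁻¹ : G) : G ⧸ N).out, by
    simpa using QuotientGroup.eq.mp (out_eq' ((g⁻¹ : G) : G ⧸ N)).symm⟩

theorem cosetFactor_mul (n : N) (g : G) : cosetFactor N (n * g) = n * cosetFactor N g := by
  ext
  simp only [cosetFactor, mk_inv_subgroup_mul, Subgroup.coe_mul, mul_assoc]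

theorem cosetFactor_out_inv (x : G ⧸ N) : cosetFactor N x.out⁻¹ = 1 := by
  ext
  simp [cosetFactor]

end QuotientGroup

open QuotientGroup

section Induced

variable {k : Type*} [CommRing k] {G : Type*} [Group G] {N : Subgroup G}
  {V : Type*} [AddCommGroup V] [Module k V] (σ : Representation k N V)

theorem apply_eq_zero_of_mem_indCarrier {f : G → V} (hf : f ∈ indCarrier N σ) {g g' : G}
    (hgg' : ((g⁻¹ : G) : G ⧸ N) = ((g'⁻¹ : G) : G ⧸ N)) (h0 : f g' = 0) : f g = 0 := by
  have hmem : g * g'⁻¹ ∈ N := by simpa using QuotientGroup.eq.mp hgg'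
  rw [show g = (⟨_, hmem⟩ : N) * g' by simp, hf, h0, map_zero]

noncomputable def indExtend : (G ⧸ N → V) →ₗ[k] indCarrier N σ where
  toFun φ := ⟨fun g => σ (cosetFactor N g) (φ ((g⁻¹ : G) : G ⧸ N)), fun n g => by
    simp only [cosetFactor_mul, mk_inv_subgroup_mul, map_mul, Module.End.mul_apply]⟩
  map_add' φ ψ := by ext; simp
  map_smul' a φ := by ext; simp

theorem indExtend_apply_out_inv (φ : G ⧸ N → V) (x : G ⧸ N) :
    (indExtend σ φ : G → V) x.out⁻¹ = φ x := by
  simp [indExtend, cosetFactor_out_inv]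

theorem indExtend_injective : Function.Injective (indExtend σ) := fun φ ψ h => funext fun x => by
  rw [← indExtend_apply_out_inv σ φ, h, indExtend_apply_out_inv]

theorem apply_mul_zpow_eq_of_indRep_apply_eq {c : G} {f : indCarrier N σ}
    (hf : indRep N σ c f = f) (m : ℤ) (g : G) : (f : G → V) (g * c ^ m) = (f : G → V) g :=
  congrFun (congrArg Subtype.val ((indRep N σ).apply_zpow_eq_self hf m)) g

variable (c : G)

noncomputable def orbitRestrict :
    indCarrier N σ →ₗ[k] (Quot (fun x y : G ⧸ N => ∃ m : ℤ, y = c ^ m • x) → V) :=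
  LinearMap.funLeft k V (fun o => (Quot.out o).out⁻¹) ∘ₗ (indCarrier N σ).subtype

theorem eq_zero_of_orbitRestrict_eq_zero {f : indCarrier N σ} (hf : indRep N σ c f = f)
    (h0 : orbitRestrict σ c f = 0) : f = 0 := by
  ext g
  set x : G ⧸ N := ((g⁻¹ : G) : G ⧸ N)
  set y := (Quot.mk (fun x y : G ⧸ N => ∃ m : ℤ, y = c ^ m • x) x).out
  obtain ⟨m, hm⟩ : ∃ m : ℤ, x = c ^ m • y :=
    (equivalence_exists_zpow_smul c).eqvGen_iff.mp (Quot.eqvGen_exact (Quot.out_eq _))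
  refine apply_eq_zero_of_mem_indCarrier σ f.2 (g' := y.out⁻¹ * c ^ (-m)) ?_ ?_
  · rwa [mul_inv_rev, zpow_neg, inv_inv, inv_inv, ← smul_eq_mul, ← MulAction.Quotient.smul_mk,
      out_eq']
  · rw [apply_mul_zpow_eq_of_indRep_apply_eq σ hf]
    exact congrFun h0 _

end Induced

section FiniteDimensional

variable {k : Type*} [Field k] {G : Type*} [Group G] [Finite G] {N : Subgroup G}
  {V : Type*} [AddCommGroup V] [Module k V] [FiniteDimensional k V] (σ : Representation k N V)

theorem index_mul_finrank_le_finrank_indCarrier :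
    N.index * finrank k V ≤ finrank k (indCarrier N σ) := by
  have := LinearMap.finrank_le_finrank_of_injective (indExtend_injective σ)
  rwa [Module.finrank_fun] at this

theorem finrank_ker_indRep_sub_one_le (c : G) :
    finrank k (LinearMap.ker (indRep N σ c - 1)) ≤
      Nat.card (Quot (fun x y : G ⧸ N => ∃ m : ℤ, y = c ^ m • x)) * finrank k V := by
  have hinj : Function.Injective
      ((orbitRestrict σ c).comp (LinearMap.ker (indRep N σ c - 1)).subtype) := by
    refine (injective_iff_map_eq_zero _).mpr fun f hf => ?_
    have hfix : indRep N σ c f = f := sub_eq_zero.mp (LinearMap.mem_ker.mp f.2)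
    exact Subtype.ext (eq_zero_of_orbitRestrict_eq_zero σ c hfix hf)
  have := LinearMap.finrank_le_finrank_of_injective hinj
  rwa [Module.finrank_fun] at this

theorem index_sub_card_orbits_le_finrank_sub_finrank_ker [Nontrivial V] (c : G) :
    N.index - Nat.card (Quot (fun x y : G ⧸ N => ∃ m : ℤ, y = c ^ m • x)) ≤
      finrank k (indCarrier N σ) - finrank k (LinearMap.ker (indRep N σ c - 1)) :=
  calc N.index - Nat.card _
      ≤ (N.index - Nat.card _) * finrank k V := Nat.le_mul_of_pos_right _ finrank_pos
    _ = N.index * finrank k V - Nat.card _ * finrank k V := Nat.sub_mul _ _ _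
    _ ≤ _ := tsub_le_tsub (index_mul_finrank_le_finrank_indCarrier σ)
      (finrank_ker_indRep_sub_one_le σ c)

end FiniteDimensional

theorem multiplicity_ge_multiplicity_trivial_general
    {G : Type*} [Group G] [Fintype G]
    (N H : Subgroup G) [(H.subgroupOf N).Normal] (c : G)
    {V : Type*} [AddCommGroup V] [Module ℂ V] [FiniteDimensional ℂ V]
    (ρ : Representation ℂ (↥N ⧸ H.subgroupOf N) V) (hρ : IsIrreducibleRep ρ)
    (ℓ₀ : ℕ)
    (hℓ₀ : ℓ₀ = N.index -
      Nat.card (Quot (fun x y : G ⧸ N => ∃ m : ℤ, y = c ^ m • x))) :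
    ℓ₀ ≤ finrank ℂ ↥(indCarrier N (ρ.comp (QuotientGroup.mk' (H.subgroupOf N))))
      - finrank ℂ
        ↥(LinearMap.ker (indRep N (ρ.comp (QuotientGroup.mk' (H.subgroupOf N))) c - 1)) := by
  have : Nontrivial V := hρ.1
  subst hℓ₀
  exact index_sub_card_orbits_le_finrank_sub_finrank_ker _ c

/-- **The multiplicity of any irreducible representation is at least that of the
trivial one** (Matheus–Yoccoz–Zmiaikou, Corollary 3.4). Let `G` be a finite group,
`N` a subgroup, `H` a normal subgroup of `N` and `c ∈ G`. For an irreducible complex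
representation `ρ` of `N/H`, let `ψ` be the representation of `G` induced from the
inflation of `ρ` to `N`, and let `ℓ_α` be the codimension of the fixed subspace of
`ψ c`. Let `ℓ₀ = [G:N] - #(orbits of the permutation of G/N induced by c)`, the
value of `ℓ_α` for the trivial representation. Then `ℓ₀ ≤ ℓ_α`. -/
theorem multiplicity_ge_multiplicity_trivial
    {G : Type*} [Group G] [Fintype G]
    (N H : Subgroup G) (hHN : H ≤ N) [(H.subgroupOf N).Normal] (c : G)
    {V : Type*} [AddCommGroup V] [Module ℂ V] [FiniteDimensional ℂ V]
    (ρ : Representation ℂ (↥N ⧸ H.subgroupOf N) V) (hρ : IsIrreducibleRep ρ)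
    (ℓ₀ : ℕ)
    (hℓ₀ : ℓ₀ = N.index -
      Nat.card (Quot (fun x y : G ⧸ N => ∃ m : ℤ, y = c ^ m • x))) :
    ℓ₀ ≤ finrank ℂ ↥(indCarrier N (ρ.comp (QuotientGroup.mk' (H.subgroupOf N))))
      - finrank ℂ
        ↥(LinearMap.ker (indRep N (ρ.comp (QuotientGroup.mk' (H.subgroupOf N))) c - 1)) :=
  multiplicity_ge_multiplicity_trivial_general N H c ρ hρ ℓ₀ hℓ₀
end

section
/- Let G be a finite group generated by two elements g_r and g_u, and let c = g_r g_u g_r⁻¹ g_u⁻¹. For every irreducible complex representation ρ_α of G of dimension greater than 1, the codimension of the fixed subspace of ρ_α(c) is strictly greater than 1 (in particular ρ_α(c) ≠ id). -/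
/-!
If `ρ c = 1`, the images of the two generators commute, so `ρ` has commuting image and, being
irreducible over `ℂ`, is one-dimensional (Schur). If the fixed space `W` of `ρ c` had codimension
one, `ρ c` would be the identity on `W` and a scalar on the line `V ⧸ W`; since `c` is a
commutator, `det (ρ c) = 1` forces that scalar to be `1`. Then `N = ρ c - 1` maps `V` into
`W = ker N`, so `N ^ 2 = 0`, and `1 = (ρ c) ^ |G| = 1 + |G| • N` gives `N = 0`.
-/

open Module

open scoped commutatorElement

theorem MonoidHom.map_commutatorElement_eq_one {G M : Type*} [Group G] [CommMonoid M]
    (φ : G →* M) (a b : G) : φ ⁅a, b⁆ = 1 := by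
  have := congrArg Units.val
    (commutatorElement_eq_one_iff_commute.mpr (Commute.all (φ.toHomUnits a) (φ.toHomUnits b)))
  rwa [← map_commutatorElement, MonoidHom.coe_toHomUnits, Units.val_one] at this

theorem MonoidHom.commute_of_closure_eq_top {G H : Type*} [Group G] [Group H] (φ : G →* H)
    {s : Set G} (hs : Subgroup.closure s = ⊤) (hcomm : ∀ x ∈ s, ∀ y ∈ s, Commute (φ x) (φ y))
    (g h : G) : Commute (φ g) (φ h) := by
  have hrange : φ.range = Subgroup.closure (φ '' s) := by
    rw [MonoidHom.range_eq_map, ← hs, MonoidHom.map_closure]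
  have := Subgroup.isMulCommutative_closure (k := φ '' s) <| by
    rintro _ ⟨x, hx, rfl⟩ _ ⟨y, hy, rfl⟩
    exact (hcomm x hx y hy).eq
  exact setLike_mul_comm (hrange ▸ φ.mem_range.mpr ⟨g, rfl⟩) (hrange ▸ φ.mem_range.mpr ⟨h, rfl⟩)

theorem eq_one_of_pow_eq_one_of_sub_one_sq_eq_zero {K R : Type*} [Field K] [CharZero K] [Ring R]
    [Module K R] [NoZeroSMulDivisors K R] {x : R} {n : ℕ} (hn : n ≠ 0) (hx : x ^ n = 1)
    (hsq : (x - 1) ^ 2 = 0) : x = 1 := by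
  set N := x - 1
  have hpow : ∀ m : ℕ, (1 + N) ^ m = 1 + m • N := by
    intro m
    induction m with
    | zero => simp
    | succ m ih =>
      rw [pow_succ, ih, add_mul, one_mul, mul_add, mul_one, smul_mul_assoc, ← sq, hsq, nsmul_zero,
        succ_nsmul]
      abel
  have hnN : (n : K) • N = 0 := by
    rw [Nat.cast_smul_eq_nsmul, ← add_eq_left (a := 1), ← hpow, add_sub_cancel, hx]
  exact sub_eq_zero.mp ((smul_eq_zero.mp hnN).resolve_left (Nat.cast_ne_zero.mpr hn))

theorem LinearMap.range_sub_one_le_ker_of_det_eq_one {K V : Type*} [Field K] [AddCommGroup V]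
    [Module K V] [FiniteDimensional K V] {f : V →ₗ[K] V} (hdet : LinearMap.det f = 1)
    (hcodim : finrank K (V ⧸ LinearMap.ker (f - 1)) = 1) :
    LinearMap.range (f - 1) ≤ LinearMap.ker (f - 1) := by
  set W := LinearMap.ker (f - 1)
  have hfix : ∀ w ∈ W, f w = w := fun w hw => sub_eq_zero.mp hw
  have hinv : W ≤ W.comap f := fun w hw => by rwa [Submodule.mem_comap, hfix w hw]
  have hres : f.restrict (p := W) (q := W) hinv = 1 :=
    LinearMap.ext fun w => Subtype.ext (hfix w w.2)
  obtain ⟨a, ha⟩ := (existsUnique_eq_smul_id_of_finrank_eq_one hcodim (W.mapQ W f hinv)).exists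
  -- `f` acts trivially on `W`, so its determinant is that of the scalar `a` on the line `V ⧸ W`.
  have ha1 : a = 1 := by
    simpa [hdet, hres, ha, hcodim] using (LinearMap.det_eq_det_mul_det W f hinv).symm
  rintro _ ⟨v, rfl⟩
  have hv : W.mkQ (f v) = W.mkQ v := by simpa [ha1] using LinearMap.congr_fun ha (W.mkQ v)
  exact (Submodule.Quotient.eq W).mp hv

theorem Representation.commute_of_closure_pair_eq_top {k G V : Type*} [CommSemiring k] [Group G]
    [AddCommMonoid V] [Module k V] (ρ : Representation k G V) {a b : G}
    (hgen : Subgroup.closure {a, b} = ⊤) (hab : ρ ⁅a, b⁆ = 1) (g h : G) :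
    Commute (ρ g) (ρ h) := by
  have hcomm : Commute (ρ.asGroupHom a) (ρ.asGroupHom b) := by
    rw [← commutatorElement_eq_one_iff_commute, ← map_commutatorElement]
    exact Units.ext (by rw [Representation.asGroupHom_apply, hab, Units.val_one])
  simpa only [Representation.asGroupHom_apply] using
    (ρ.asGroupHom.commute_of_closure_eq_top hgen (by
      rintro x (rfl | rfl) y (rfl | rfl) <;> simp [hcomm, hcomm.symm]) g h).units_val

section Schur

variable {k Γ V : Type*} [Field k] [IsAlgClosed k] [Group Γ] [AddCommGroup V] [Module k V]
  [FiniteDimensional k V] {ρ : Representation k Γ V}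

theorem IsIrreducibleRep.exists_eq_smul_id_of_commute (hρ : IsIrreducibleRep ρ) {g : Γ}
    (hg : ∀ γ, Commute (ρ g) (ρ γ)) : ∃ μ : k, ρ g = μ • LinearMap.id := by
  have := hρ.1
  obtain ⟨μ, hμ⟩ := Module.End.exists_eigenvalue (ρ g)
  have htop : Module.End.eigenspace (ρ g) μ = ⊤ := by
    refine (hρ.2 _ fun γ v hv => ?_).resolve_left hμ
    rw [Module.End.mem_eigenspace_iff] at hv ⊢
    rw [← Module.End.mul_apply, (hg γ).eq, Module.End.mul_apply, hv, map_smul]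
  exact ⟨μ, LinearMap.ext fun v => Module.End.mem_eigenspace_iff.mp (htop ▸ Submodule.mem_top)⟩

theorem IsIrreducibleRep.finrank_eq_one_of_commute (hρ : IsIrreducibleRep ρ)
    (hcomm : ∀ g h, Commute (ρ g) (ρ h)) : finrank k V = 1 := by
  have := hρ.1
  obtain ⟨v, hv⟩ := exists_ne (0 : V)
  have htop : Submodule.span k {v} = ⊤ := by
    refine (hρ.2 _ fun γ w hw => ?_).resolve_left (by simpa using hv)
    obtain ⟨μ, hμ⟩ := hρ.exists_eq_smul_id_of_commute (hcomm γ)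
    rw [hμ]
    exact Submodule.smul_mem _ _ hw
  rw [← finrank_top, ← htop, finrank_span_singleton hv]

end Schur

/-- **Regular origamis: higher-dimensional representations have multiplicity > 1**
(Matheus–Yoccoz–Zmiaikou, Corollary 3.7). Let `G` be a finite group generated by
`g_r, g_u` and let `c = g_r g_u g_r⁻¹ g_u⁻¹`. For every irreducible complex
representation `ρ` of `G` of dimension `> 1`, the codimension of the fixed subspace
of `ρ c` is strictly greater than `1`; in particular `ρ c ≠ 1`. -/
theorem codim_fixed_gt_one_of_regular_origami
    {G : Type*} [Group G] [Fintype G]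
    (g_r g_u : G) (hgen : Subgroup.closure ({g_r, g_u} : Set G) = ⊤)
    (c : G) (hc : c = g_r * g_u * g_r⁻¹ * g_u⁻¹)
    {V : Type*} [AddCommGroup V] [Module ℂ V] [FiniteDimensional ℂ V]
    (ρ : Representation ℂ G V) (hρ : IsIrreducibleRep ρ)
    (hdim : 1 < finrank ℂ V) :
    1 < finrank ℂ V - finrank ℂ ↥(LinearMap.ker (ρ c - 1)) ∧ ρ c ≠ 1 := by
  replace hc : c = ⁅g_r, g_u⁆ := hc
  have hne : ρ c ≠ 1 := fun h1 =>
    hdim.ne' (hρ.finrank_eq_one_of_commute (ρ.commute_of_closure_pair_eq_top hgen (hc ▸ h1)))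
  refine ⟨?_, hne⟩
  have hker : finrank ℂ (LinearMap.ker (ρ c - 1)) < finrank ℂ V :=
    Submodule.finrank_lt fun h => hne (sub_eq_zero.mp (LinearMap.ker_eq_top.mp h))
  by_contra hcodim
  have hquot := Submodule.finrank_quotient_add_finrank (LinearMap.ker (ρ c - 1))
  have hdet : LinearMap.det (ρ c) = 1 :=
    hc ▸ (LinearMap.det.comp ρ).map_commutatorElement_eq_one _ _
  have hsq : (ρ c - 1) ^ 2 = 0 :=
    LinearMap.range_le_ker_iff.mp (LinearMap.range_sub_one_le_ker_of_det_eq_one hdet (by omega))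
  have hfin : ρ c ^ Fintype.card G = 1 := by rw [← map_pow, pow_card_eq_one, map_one]
  exact hne (eq_one_of_pow_eq_one_of_sub_one_sq_eq_zero (K := ℂ) Fintype.card_ne_zero hfin hsq)
end

section
/- Let Γ be a finite group and V an irreducible real representation of Γ of real type, meaning every Γ-equivariant ℝ-linear endomorphism of V is multiplication by a real scalar; fix a Γ-invariant inner product ⟨·,·⟩ on V. Let W be a real Γ-module isomorphic to V^ℓ and carrying a Γ-invariant nondegenerate alternating ℝ-bilinear form {·,·}. Then ℓ is even, say ℓ = 2ℓ', and there exists an isomorphism of Γ-modules ι : V^ℓ → W such that {ι(v₁,…,v_ℓ), ι(v'₁,…,v'_ℓ)} = Σ_{j=1}^{ℓ'} ( ⟨v_j, v'_{j+ℓ'}⟩ − ⟨v'_j, v_{j+ℓ'}⟩ ) for all v, v' ∈ V^ℓ. -/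
/-!
Pull `ω` back to `Ω` on `V^ℓ` along `W ≃ V^ℓ`. Each block `(x, y) ↦ Ω (xᵢ, yⱼ)` is an invariant
form on `V`, so by Schur's lemma for real type it is `cᵢⱼ • B`; that is, `Ω = G ⊗ B` for a form `G`
on `ℝ^ℓ`, alternating and nondegenerate because `Ω` is. Linear Darboux gives a
symplectic basis of `(ℝ^ℓ, G)`, so `ℓ = 2m`, and tensoring that basis with `V` gives the required
isomorphism; it commutes with `Γ` because `Γ` acts only on the `V` factor.
-/

open LinearMap (BilinForm)
open TensorProduct

namespace LinearMap.BilinForm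

variable {K V : Type*} [Field K] [AddCommGroup V] [Module K V]

def symplecticSum (B : BilinForm K V) (m : ℕ) : BilinForm K ((Fin m → V) × (Fin m → V)) :=
  LinearMap.mk₂ K (fun z z' => ∑ j, (B (z.1 j) (z'.2 j) - B (z'.1 j) (z.2 j)))
    (fun z w z' => by simp [Finset.sum_add_distrib]; ring)
    (fun c z z' => by simp [mul_sub, Finset.mul_sum])
    (fun z z' w' => by simp [Finset.sum_add_distrib]; ring)
    (fun c z z' => by simp [mul_sub, Finset.mul_sum])

@[simp]
theorem symplecticSum_apply (B : BilinForm K V) (m : ℕ) (z z' : (Fin m → V) × (Fin m → V)) :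
    B.symplecticSum m z z' = ∑ j, (B (z.1 j) (z'.2 j) - B (z'.1 j) (z.2 j)) :=
  rfl

theorem sum_apply_single_apply_single (B : BilinForm K V) {m : ℕ} (k l : Fin m) (v w : V) :
    ∑ j, B ((Pi.single k v : Fin m → V) j) ((Pi.single l w : Fin m → V) j) =
      if k = l then B v w else 0 := by
  rw [Finset.sum_eq_single k (fun j _ hj => by simp [hj]) (by simp)]
  split_ifs with h
  · rw [h, Pi.single_eq_same, Pi.single_eq_same]
  · rw [Pi.single_eq_of_ne h, map_zero]

variable {F : BilinForm K V}

theorem exists_apply_eq_one (hF : F.SeparatingLeft) {u : V} (hu : u ≠ 0) : ∃ v, F u v = 1 := by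
  obtain ⟨y, hy⟩ : ∃ y, F u y ≠ 0 := by
    by_contra! h
    exact hu (hF u h)
  exact ⟨(F u y)⁻¹ • y, by simp [hy]⟩

theorem exists_prodEquiv_ker_inf_ker (hF : F.IsAlt) {u v : V} (huv : F u v = 1) :
    ∃ S : ((K × K) × ↥(ker (F u) ⊓ ker (F v))) ≃ₗ[K] V,
      ∀ a x, S (a, x) = a.1 • u + a.2 • v + x := by
  have hvu : F v u = -1 := by rw [← hF.neg_eq, huv]
  set f := ((toSpanSingleton K V u).coprod (toSpanSingleton K V v)).coprod
    (ker (F u) ⊓ ker (F v)).subtype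
  have hf : ∀ a x, f (a, x) = a.1 • u + a.2 • v + x := fun _ _ => rfl
  refine ⟨.ofBijective f ⟨?_, fun y => ?_⟩, hf⟩
  · refine (injective_iff_map_eq_zero f).2 fun ⟨a, x⟩ h => ?_
    have hx : F u x = 0 ∧ F v x = 0 := Submodule.mem_inf.1 x.2
    have hxv : F x v = 0 := by rw [← hF.neg_eq, hx.2, neg_zero]
    have h1 : a.1 = 0 := by simpa [hf, hF.self_eq_zero, huv, hxv] using congr(F $h v)
    have h2 : a.2 = 0 := by simpa [hf, hF.self_eq_zero, huv, hx.1] using congr(F u $h)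
    have h3 : x = 0 := by simpa [hf, h1, h2] using h
    simp [Prod.ext_iff, h1, h2, h3]
  · refine ⟨((F y v, F u y), ⟨y - F y v • u - F u y • v, ?_⟩), by simp [hf]⟩
    simp [hF.self_eq_zero, huv, hvu, ← hF.neg_eq v y]

theorem exists_darbouxEquiv [FiniteDimensional K V] (hFalt : F.IsAlt) (hFnd : F.SeparatingLeft) :
    ∃ m, ∃ ι : ((Fin m → K) × (Fin m → K)) ≃ₗ[K] V,
      ∀ a b, F (ι a) (ι b) = ∑ j, (a.1 j * b.2 j - b.1 j * a.2 j) := by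
  induction hn : Module.finrank K V using Nat.strong_induction_on generalizing V F with
  | _ n ih =>
  rcases subsingleton_or_nontrivial V with _ | _
  · exact ⟨0, .ofSubsingleton _ _, fun a b => by simp⟩
  obtain ⟨u, hu⟩ := exists_ne (0 : V)
  obtain ⟨v, huv⟩ := exists_apply_eq_one hFnd hu
  have hvu : F v u = -1 := by rw [← hFalt.neg_eq, huv]
  set C := ker (F u) ⊓ ker (F v)
  obtain ⟨S, hS⟩ : ∃ S : ((K × K) × C) ≃ₗ[K] V, ∀ a x, S (a, x) = a.1 • u + a.2 • v + x :=
    exists_prodEquiv_ker_inf_ker hFalt huv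
  have huC (x : C) : F u x = 0 := (Submodule.mem_inf.1 x.2).1
  have hvC (x : C) : F v x = 0 := (Submodule.mem_inf.1 x.2).2
  have hCu (x : C) : F x u = 0 := by rw [← hFalt.neg_eq, huC, neg_zero]
  have hCv (x : C) : F x v = 0 := by rw [← hFalt.neg_eq, hvC, neg_zero]
  have hfinrank : Module.finrank K C < n := by
    rw [← hn, ← S.finrank_eq, Module.finrank_prod, Module.finrank_prod, Module.finrank_self]
    omega
  have hnd' : (F.restrict C).SeparatingLeft := by
    refine fun x hx => Subtype.ext (hFnd x fun y => ?_)
    obtain ⟨⟨a, y'⟩, rfl⟩ := S.surjective y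
    rw [hS]
    simpa [hCu, hCv] using hx y'
  obtain ⟨m, ι', hι'⟩ :=
    ih _ hfinrank (F := F.restrict C) (fun x => hFalt.self_eq_zero x) hnd' rfl
  let cons := (Fin.consLinearEquiv K fun _ : Fin (m + 1) => K).symm
  refine ⟨m + 1, cons.prodCongr cons ≪≫ₗ LinearEquiv.prodProdProdComm K _ _ _ _ ≪≫ₗ
    (LinearEquiv.refl K (K × K)).prodCongr ι' ≪≫ₗ S, fun a b => ?_⟩
  have key := hι' (Fin.tail a.1, Fin.tail a.2) (Fin.tail b.1, Fin.tail b.2)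
  simp [cons, hS, hFalt.self_eq_zero, huv, hvu, huC, hvC, hCu, hCv, Fin.sum_univ_succ,
    Fin.tail] at key ⊢
  rw [key]
  ring

end LinearMap.BilinForm

section Tuples

variable {K V ι : Type*} [Field K] [AddCommGroup V] [Module K V]

/-- `Ω = G ⊗ B` under the identification `ι → V ≃ (ι → K) ⊗ V`. -/
def IsTensorForm (Ω : BilinForm K (ι → V)) (G : BilinForm K (ι → K)) (B : BilinForm K V) : Prop :=
  ∀ p q x y, Ω (fun i => p i • x) (fun i => q i • y) = G p q * B x y

variable {Ω : BilinForm K (ι → V)} {G : BilinForm K (ι → K)} {B : BilinForm K V}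

theorem IsTensorForm.isAlt (h : IsTensorForm Ω G B) (hΩ : Ω.IsAlt) {x : V} (hx : B x x ≠ 0) :
    G.IsAlt :=
  fun p => by simpa [hΩ.self_eq_zero, hx] using (h p p x x).symm

variable [Fintype ι] [DecidableEq ι]

theorem IsTensorForm.separatingLeft (h : IsTensorForm Ω G B) (hΩ : Ω.SeparatingLeft) {x : V}
    (hx : x ≠ 0) : G.SeparatingLeft := by
  unfold IsTensorForm at h
  intro p hp
  have hsingle (j : ι) (y : V) : Pi.single j y = fun i => (Pi.single j 1 : ι → K) i • y := by
    ext; simp [Pi.single_apply]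
  have hpx : (fun i => p i • x) = 0 := hΩ _ fun y => by
    rw [← Finset.univ_sum_single y]
    simp [hsingle, h, hp]
  funext i
  exact (smul_eq_zero.1 (congr_fun hpx i)).resolve_right hx

variable (V) {m : ℕ}

/-- `id_V ⊗ L`, read on coordinates through `V ⊗ (ι → K) ≃ (ι → V)`. -/
noncomputable def tupleEquiv (L : ((Fin m → K) × (Fin m → K)) ≃ₗ[K] (ι → K)) :
    ((Fin m → V) × (Fin m → V)) ≃ₗ[K] (ι → V) :=
  (piScalarRight K K V _).symm.prodCongr (piScalarRight K K V _).symm ≪≫ₗ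
    (prodRight K K V _ _).symm ≪≫ₗ L.lTensor V ≪≫ₗ piScalarRight K K V ι

variable {V} (L : ((Fin m → K) × (Fin m → K)) ≃ₗ[K] (ι → K))

@[simp]
theorem tupleEquiv_single_zero (k : Fin m) (v : V) :
    tupleEquiv V L (Pi.single k v, 0) = fun i => L (Pi.single k 1, 0) i • v := by
  have : ((v ⊗ₜ[K] (Pi.single k 1 : Fin m → K), 0) :
      (V ⊗[K] (Fin m → K)) × (V ⊗[K] (Fin m → K))) =
      (v ⊗ₜ Pi.single k 1, v ⊗ₜ (0 : Fin m → K)) := by simp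
  simp [tupleEquiv, this]

@[simp]
theorem tupleEquiv_zero_single (k : Fin m) (v : V) :
    tupleEquiv V L (0, Pi.single k v) = fun i => L (0, Pi.single k 1) i • v := by
  have : ((0, v ⊗ₜ[K] (Pi.single k 1 : Fin m → K)) :
      (V ⊗[K] (Fin m → K)) × (V ⊗[K] (Fin m → K))) =
      (v ⊗ₜ (0 : Fin m → K), v ⊗ₜ Pi.single k 1) := by simp
  simp [tupleEquiv, this]

theorem tupleEquiv_compLeft (f : V →ₗ[K] V) (z : (Fin m → V) × (Fin m → V)) :
    tupleEquiv V L (fun j => f (z.1 j), fun j => f (z.2 j)) =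
      fun i => f (tupleEquiv V L z i) := by
  have : (tupleEquiv V L).toLinearMap ∘ₗ (f.compLeft (Fin m)).prodMap (f.compLeft (Fin m)) =
      f.compLeft ι ∘ₗ (tupleEquiv V L).toLinearMap := by
    have hf_single (k : Fin m) (v : V) :
        f.compLeft (Fin m) (Pi.single k v) = Pi.single k (f v) :=
      funext (Pi.apply_single (fun _ => f) (fun _ => map_zero f) k v)
    ext k v i : 4 <;> simp [hf_single]
  exact congr($this z)

theorem IsTensorForm.apply_tupleEquiv (h : IsTensorForm Ω G B) (hB : ∀ x y, B x y = B y x)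
    (hL : ∀ a b, G (L a) (L b) = ∑ j, (a.1 j * b.2 j - b.1 j * a.2 j))
    (z z' : (Fin m → V) × (Fin m → V)) :
    Ω (tupleEquiv V L z) (tupleEquiv V L z') = ∑ j, (B (z.1 j) (z'.2 j) - B (z'.1 j) (z.2 j)) := by
  have : Ω.compl₁₂ (tupleEquiv V L).toLinearMap (tupleEquiv V L).toLinearMap =
      B.symplecticSum m := by
    unfold IsTensorForm at h
    ext k v l w <;> simp [h, hL, B.sum_apply_single_apply_single, hB w v] <;>
      simp [Pi.single_apply, eq_comm]
  exact congr($this z z')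

end Tuples

section RealType

variable {K Γ V ι : Type*} [Field K] [Group Γ] [AddCommGroup V] [Module K V]
  [FiniteDimensional K V] {ρ : Representation K Γ V} {B : BilinForm K V}

theorem exists_eq_smul_of_invariant
    (hreal : ∀ φ : V →ₗ[K] V, (∀ γ v, φ (ρ γ v) = ρ γ (φ v)) → ∃ r : K, φ = r • LinearMap.id)
    (hB : B.Nondegenerate) (hBinv : ∀ γ v w, B (ρ γ v) (ρ γ w) = B v w)
    {D : BilinForm K V} (hDinv : ∀ γ v w, D (ρ γ v) (ρ γ w) = D v w) :
    ∃ c : K, D = c • B := by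
  set φ := D.symmCompOfNondegenerate B hB
  have hφ (v w : V) : B (φ v) w = D v w := D.symmCompOfNondegenerate_left_apply hB w v
  have hφρ (γ : Γ) (v w : V) : B (φ (ρ γ v)) w = B (ρ γ (φ v)) w := by
    rw [hφ, ← ρ.self_inv_apply γ w, hDinv, hBinv, hφ]
  obtain ⟨c, hc⟩ := hreal φ fun γ v => sub_eq_zero.1 <| hB.1 _ fun w => by
    rw [map_sub, LinearMap.sub_apply, hφρ, sub_self]
  exact ⟨c, LinearMap.ext₂ fun v w => by simp [← hφ, hc]⟩

theorem exists_isTensorForm_of_invariant [Fintype ι] [DecidableEq ι]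
    (hreal : ∀ φ : V →ₗ[K] V, (∀ γ v, φ (ρ γ v) = ρ γ (φ v)) → ∃ r : K, φ = r • LinearMap.id)
    (hB : B.Nondegenerate) (hBinv : ∀ γ v w, B (ρ γ v) (ρ γ w) = B v w)
    {Ω : BilinForm K (ι → V)}
    (hΩinv : ∀ γ x y, Ω (fun i => ρ γ (x i)) (fun i => ρ γ (y i)) = Ω x y) :
    ∃ G, IsTensorForm Ω G B := by
  have hρ_single (γ : Γ) (i : ι) (x : V) :
      (fun k => ρ γ ((Pi.single i x : ι → V) k)) = Pi.single i (ρ γ x) :=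
    funext (Pi.apply_single (fun _ => ρ γ) (fun _ => map_zero _) i x)
  choose c hc using fun i j => exists_eq_smul_of_invariant hreal hB hBinv
    (D := Ω.compl₁₂ (LinearMap.single K (fun _ => V) i) (LinearMap.single K (fun _ => V) j))
    fun γ x y => by simp [← hρ_single, hΩinv]
  have hsmul (p : ι → K) (x : V) : (fun i => p i • x) = ∑ i, p i • Pi.single i x := by
    ext; simp [Finset.sum_apply, Pi.single_apply]
  refine ⟨Matrix.toBilin' (Matrix.of c), fun p q x y => ?_⟩
  have hcij (i j : ι) : Ω (Pi.single i x) (Pi.single j y) = c i j * B x y := by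
    simpa using congr($(hc i j) x y)
  simp [hsmul p x, hsmul q y, hcij, Matrix.toBilin'_apply, Finset.sum_mul, Finset.mul_sum]
  rw [Finset.sum_comm]
  exact Finset.sum_congr rfl fun i _ => Finset.sum_congr rfl fun j _ => by ring

end RealType

theorem symplectic_normal_form_real_isotypic_general
    {Γ : Type*} [Group Γ]
    {V : Type*} [AddCommGroup V] [Module ℝ V] [FiniteDimensional ℝ V]
    (ρ : Representation ℝ Γ V) (hρ : IsIrreducibleRep ρ)
    (hreal : ∀ φ : V →ₗ[ℝ] V, (∀ (γ : Γ) (v : V), φ (ρ γ v) = ρ γ (φ v)) →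
      ∃ r : ℝ, φ = r • LinearMap.id)
    (B : LinearMap.BilinForm ℝ V)
    (hBsymm : ∀ v w : V, B v w = B w v)
    (hBpos : ∀ v : V, v ≠ 0 → 0 < B v v)
    (hBinv : ∀ (γ : Γ) (v w : V), B (ρ γ v) (ρ γ w) = B v w)
    {W : Type*} [AddCommGroup W] [Module ℝ W]
    (σ : Representation ℝ Γ W)
    (ℓ : ℕ) (e : (Fin ℓ → V) ≃ₗ[ℝ] W)
    (he : ∀ (γ : Γ) (v : Fin ℓ → V), e (fun j => ρ γ (v j)) = σ γ (e v))
    (ω : LinearMap.BilinForm ℝ W)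
    (hωalt : ∀ w : W, ω w w = 0)
    (hωnd : ∀ w : W, (∀ w' : W, ω w w' = 0) → w = 0)
    (hωinv : ∀ (γ : Γ) (w w' : W), ω (σ γ w) (σ γ w') = ω w w') :
    ∃ ℓ' : ℕ, ℓ = 2 * ℓ' ∧
      ∃ ι : ((Fin ℓ' → V) × (Fin ℓ' → V)) ≃ₗ[ℝ] W,
        (∀ (γ : Γ) (v : (Fin ℓ' → V) × (Fin ℓ' → V)),
          ι (fun j => ρ γ (v.1 j), fun j => ρ γ (v.2 j)) = σ γ (ι v)) ∧
        ∀ v v' : (Fin ℓ' → V) × (Fin ℓ' → V),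
          ω (ι v) (ι v') = ∑ j : Fin ℓ', (B (v.1 j) (v'.2 j) - B (v'.1 j) (v.2 j)) := by
  have : Nontrivial V := hρ.1
  obtain ⟨x₀, hx₀⟩ := exists_ne (0 : V)
  have hBsep : B.SeparatingLeft := fun x hx => by_contra fun h => (hBpos x h).ne' (hx x)
  have hBnd : B.Nondegenerate := ⟨hBsep, fun x hx => hBsep x fun y => hBsymm x y ▸ hx y⟩
  set Ω := ω.compl₁₂ e.toLinearMap e.toLinearMap
  have hΩnd : Ω.SeparatingLeft := fun x hx =>
    e.map_eq_zero_iff.1 (hωnd _ fun w => by simpa [Ω] using hx (e.symm w))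
  obtain ⟨G, hG⟩ := exists_isTensorForm_of_invariant hreal hBnd hBinv (Ω := Ω)
    fun γ x y => by simp [Ω, he, hωinv]
  obtain ⟨m, L, hL⟩ := LinearMap.BilinForm.exists_darbouxEquiv
    (hG.isAlt (fun x => hωalt (e x)) (hBpos x₀ hx₀).ne') (hG.separatingLeft hΩnd hx₀)
  refine ⟨m, ?_, tupleEquiv V L ≪≫ₗ e, fun γ z => ?_, hG.apply_tupleEquiv L hBsymm hL⟩
  · simpa [two_mul] using L.finrank_eq.symm
  · simp [tupleEquiv_compLeft L (ρ γ), he]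

/-- **Normal form of an invariant symplectic form on a real-type isotypic module**
(Matheus–Yoccoz–Zmiaikou, Proposition 3.16). Let `Γ` be a finite group and `V` an
irreducible real representation of real type (every equivariant endomorphism is a
real scalar), with an invariant inner product `B`. Let `W ≅ V^ℓ` be an isotypic
`Γ`-module carrying an invariant nondegenerate alternating form `ω`. Then `ℓ` is
even, `ℓ = 2ℓ'`, and there is an equivariant isomorphism
`ι : V^{ℓ'} × V^{ℓ'} ≃ W` (the two factors corresponding to the indices
`1, …, ℓ'` and `ℓ'+1, …, 2ℓ'`) with
`ω (ι v) (ι v') = ∑_{j} (B (v_j) (v'_{j+ℓ'}) - B (v'_j) (v_{j+ℓ'}))`. -/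
theorem symplectic_normal_form_real_isotypic
    {Γ : Type*} [Group Γ] [Fintype Γ]
    {V : Type*} [AddCommGroup V] [Module ℝ V] [FiniteDimensional ℝ V]
    (ρ : Representation ℝ Γ V) (hρ : IsIrreducibleRep ρ)
    (hreal : ∀ φ : V →ₗ[ℝ] V, (∀ (γ : Γ) (v : V), φ (ρ γ v) = ρ γ (φ v)) →
      ∃ r : ℝ, φ = r • LinearMap.id)
    (B : LinearMap.BilinForm ℝ V)
    (hBsymm : ∀ v w : V, B v w = B w v)
    (hBpos : ∀ v : V, v ≠ 0 → 0 < B v v)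
    (hBinv : ∀ (γ : Γ) (v w : V), B (ρ γ v) (ρ γ w) = B v w)
    {W : Type*} [AddCommGroup W] [Module ℝ W]
    (σ : Representation ℝ Γ W)
    (ℓ : ℕ) (e : (Fin ℓ → V) ≃ₗ[ℝ] W)
    (he : ∀ (γ : Γ) (v : Fin ℓ → V), e (fun j => ρ γ (v j)) = σ γ (e v))
    (ω : LinearMap.BilinForm ℝ W)
    (hωalt : ∀ w : W, ω w w = 0)
    (hωnd : ∀ w : W, (∀ w' : W, ω w w' = 0) → w = 0)
    (hωinv : ∀ (γ : Γ) (w w' : W), ω (σ γ w) (σ γ w') = ω w w') :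
    ∃ ℓ' : ℕ, ℓ = 2 * ℓ' ∧
      ∃ ι : ((Fin ℓ' → V) × (Fin ℓ' → V)) ≃ₗ[ℝ] W,
        (∀ (γ : Γ) (v : (Fin ℓ' → V) × (Fin ℓ' → V)),
          ι (fun j => ρ γ (v.1 j), fun j => ρ γ (v.2 j)) = σ γ (ι v)) ∧
        ∀ v v' : (Fin ℓ' → V) × (Fin ℓ' → V),
          ω (ι v) (ι v') = ∑ j : Fin ℓ', (B (v.1 j) (v'.2 j) - B (v'.1 j) (v.2 j)) :=
  symplectic_normal_form_real_isotypic_general ρ hρ hreal B hBsymm hBpos hBinv σ ℓ e he ω hωalt hωnd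
    hωinv
end

section
/- Let G be a finite group and let W be a real G-module that is isotypic of quaternionic type, i.e. W is a direct sum of copies of a single irreducible real G-module V whose ring of G-equivariant ℝ-linear endomorphisms is noncommutative (isomorphic to the quaternions ℍ). Let B be a G-invariant nondegenerate alternating ℝ-bilinear form on W. Then there exist a nonzero vector v ∈ W and an element g ∈ G such that B(v, g·v) ≠ 0. -/
theorem Representation.mul_self_eq_one_of_isotropic_orbits {R G W : Type*} [CommRing R]
    [Group G] [AddCommGroup W] [Module R W] {σ : Representation R G W}
    {B : LinearMap.BilinForm R W} (hBalt : B.IsAlt) (hBsep : B.SeparatingLeft)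
    (hBinv : ∀ (g : G) (w w' : W), B (σ g w) (σ g w') = B w w')
    (horbit : ∀ (w : W) (g : G), B w (σ g w) = 0) (g : G) : σ g * σ g = 1 := by
  have hpolar : ∀ v w : W, B v (σ g w) = -B w (σ g v) := fun v w => by
    have h := horbit (v + w) g
    simp only [map_add, LinearMap.add_apply, horbit] at h
    linear_combination h
  have hflip : ∀ v w : W, B w (σ g v) = -B v (σ g⁻¹ w) := fun v w => by
    rw [← hBinv g⁻¹, ← Module.End.mul_apply, ← map_mul, inv_mul_cancel, map_one,
      Module.End.one_apply]
    exact (hBalt.neg_eq _ _).symm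
  have hinv : σ g = σ g⁻¹ := by
    ext w
    refine sub_eq_zero.mp (hBsep _ fun v => ?_)
    rw [map_sub, LinearMap.sub_apply, ← hBalt.neg_eq v, ← hBalt.neg_eq v, hpolar, hflip]
    ring
  nth_rw 2 [hinv]
  rw [← map_mul, mul_inv_cancel, map_one]

theorem Representation.map_eq_one_of_linearEquiv_pi {k G ι V W : Type*} [CommSemiring k]
    [Monoid G] [Nonempty ι] [AddCommMonoid V] [Module k V] [AddCommMonoid W] [Module k W]
    {ρ : Representation k G V} {σ : Representation k G W} (e : (ι → V) ≃ₗ[k] W)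
    (he : ∀ (g : G) (v : ι → V), e (fun j => ρ g (v j)) = σ g (e v))
    {g : G} (hg : σ g = 1) : ρ g = 1 := by
  classical
  obtain ⟨i⟩ := ‹Nonempty ι›
  ext v
  have hsingle := he g (Pi.single i v)
  rw [hg, Module.End.one_apply] at hsingle
  simpa using congrFun (e.injective hsingle) i

theorem commute_of_mul_self_eq_one {M : Type*} [Monoid M] {a b : M} (ha : a * a = 1)
    (hb : b * b = 1) (hab : a * b * (a * b) = 1) : Commute a b :=
  calc a * b = a * (a * b * (a * b)) * b := by rw [hab, mul_one]
    _ = (a * a) * (b * a) * (b * b) := by simp only [mul_assoc]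
    _ = b * a := by rw [ha, hb, one_mul, mul_one]

section

variable {k G V : Type*} [CommRing k] [Group G] [AddCommGroup V] [Module k V]
  {ρ : Representation k G V}

theorem IsIrreducibleRep.eq_one_or_eq_neg_one (hρ : IsIrreducibleRep ρ)
    (hsq : ∀ g : G, ρ g * ρ g = 1) (g : G) : ρ g = 1 ∨ ρ g = -1 := by
  have hcomm : ∀ h : G, Commute (ρ g) (ρ h) := fun h =>
    commute_of_mul_self_eq_one (hsq g) (hsq h) (by rw [← map_mul, hsq])
  have hinvariant :
      ∀ h : G, ∀ v ∈ LinearMap.ker (ρ g - 1), ρ h v ∈ LinearMap.ker (ρ g - 1) := by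
    intro h v hv
    rw [LinearMap.mem_ker, ← Module.End.mul_apply,
      ((hcomm h).sub_left (Commute.one_left _)).eq, Module.End.mul_apply, hv, map_zero]
  rcases hρ.2 _ hinvariant with hbot | htop
  · right
    have hfactor : (ρ g - 1) * (ρ g + 1) = 0 := by
      rw [show (ρ g - 1) * (ρ g + 1) = ρ g * ρ g - 1 by noncomm_ring, hsq, sub_self]
    rw [← add_eq_zero_iff_eq_neg]
    ext v
    apply LinearMap.ker_eq_bot.mp hbot
    rw [← Module.End.mul_apply, hfactor, LinearMap.zero_apply, map_zero]
  · left
    exact sub_eq_zero.mp (LinearMap.ker_eq_top.mp htop)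

theorem IsIrreducibleRep.span_singleton_eq_top_of_forall_eq_smul (hρ : IsIrreducibleRep ρ)
    (hscalar : ∀ g : G, ∃ c : k, ρ g = c • 1) {v : V} (hv : v ≠ 0) :
    Submodule.span k {v} = ⊤ := by
  refine (hρ.2 _ fun g w hw => ?_).resolve_left fun hbot => hv ?_
  · obtain ⟨c, hc⟩ := hscalar g
    rw [hc, LinearMap.smul_apply, Module.End.one_apply]
    exact Submodule.smul_mem _ c hw
  · rw [← Submodule.mem_bot k, ← hbot]
    exact Submodule.mem_span_singleton_self v

end

theorem LinearMap.exists_eq_smul_id_of_span_singleton_eq_top {k V : Type*} [CommSemiring k]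
    [AddCommMonoid V] [Module k V] {v : V} (hv : Submodule.span k {v} = ⊤) (φ : V →ₗ[k] V) :
    ∃ c : k, φ = c • LinearMap.id := by
  obtain ⟨c, hc⟩ := Submodule.mem_span_singleton.mp (hv ▸ Submodule.mem_top : φ v ∈ _)
  exact ⟨c, LinearMap.ext_on hv (by simp [hc])⟩

theorem LinearMap.comp_comm_of_span_singleton_eq_top {k V : Type*} [CommSemiring k]
    [AddCommMonoid V] [Module k V] {v : V} (hv : Submodule.span k {v} = ⊤) (φ ψ : V →ₗ[k] V) :
    φ ∘ₗ ψ = ψ ∘ₗ φ := by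
  obtain ⟨a, rfl⟩ := exists_eq_smul_id_of_span_singleton_eq_top hv φ
  obtain ⟨b, rfl⟩ := exists_eq_smul_id_of_span_singleton_eq_top hv ψ
  ext w
  simp only [LinearMap.comp_apply, LinearMap.smul_apply, LinearMap.id_apply, smul_smul, mul_comm]

theorem exists_nonorthogonal_orbit_vector_quaternionic_general
    {G : Type*} [Group G]
    {V : Type*} [AddCommGroup V] [Module ℝ V]
    (ρ : Representation ℝ G V) (hρ : IsIrreducibleRep ρ)
    (hquat : ∃ φ ψ : V →ₗ[ℝ] V,
      (∀ (g : G) (v : V), φ (ρ g v) = ρ g (φ v)) ∧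
      (∀ (g : G) (v : V), ψ (ρ g v) = ρ g (ψ v)) ∧
      φ ∘ₗ ψ ≠ ψ ∘ₗ φ)
    {W : Type*} [AddCommGroup W] [Module ℝ W]
    (σ : Representation ℝ G W)
    (ℓ : ℕ) (hℓ : 0 < ℓ) (e : (Fin ℓ → V) ≃ₗ[ℝ] W)
    (he : ∀ (g : G) (v : Fin ℓ → V), e (fun j => ρ g (v j)) = σ g (e v))
    (B : LinearMap.BilinForm ℝ W)
    (hBalt : ∀ w : W, B w w = 0)
    (hBnd : ∀ w : W, (∀ w' : W, B w w' = 0) → w = 0)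
    (hBinv : ∀ (g : G) (w w' : W), B (σ g w) (σ g w') = B w w') :
    ∃ v : W, v ≠ 0 ∧ ∃ g : G, B v (σ g v) ≠ 0 := by
  by_contra! hisotropic
  have horbit : ∀ (w : W) (g : G), B w (σ g w) = 0 := fun w g => by
    rcases eq_or_ne w 0 with rfl | hw
    · simp
    · exact hisotropic w hw g
  have hσ := σ.mul_self_eq_one_of_isotropic_orbits hBalt hBnd hBinv horbit
  have : Nonempty (Fin ℓ) := ⟨⟨0, hℓ⟩⟩
  have hsq : ∀ g : G, ρ g * ρ g = 1 := fun g => by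
    rw [← map_mul]
    exact Representation.map_eq_one_of_linearEquiv_pi e he (by rw [map_mul, hσ])
  have hscalar : ∀ g : G, ∃ c : ℝ, ρ g = c • 1 := fun g => by
    rcases hρ.eq_one_or_eq_neg_one hsq g with h | h
    · exact ⟨1, by rw [h, one_smul]⟩
    · exact ⟨-1, by rw [h, neg_one_smul]⟩
  have : Nontrivial V := hρ.1
  obtain ⟨v₀, hv₀⟩ := exists_ne (0 : V)
  obtain ⟨φ, ψ, -, -, hne⟩ := hquat
  exact hne (LinearMap.comp_comm_of_span_singleton_eq_top
    (hρ.span_singleton_eq_top_of_forall_eq_smul hscalar hv₀) φ ψ)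

/-- **Nonvanishing of an invariant symplectic form along an orbit on a quaternionic
isotypic module** (Matheus–Yoccoz–Zmiaikou, Lemma 3.19). Let `G` be a finite group
and `W` a real `G`-module which is isotypic of quaternionic type: `W` is a direct
sum of `ℓ ≥ 1` copies of an irreducible real `G`-module `V` whose ring of
equivariant endomorphisms is noncommutative. Let `B` be a `G`-invariant
nondegenerate alternating bilinear form on `W`. Then there are a nonzero `v ∈ W`
and `g ∈ G` with `B v (g • v) ≠ 0`. -/
theorem exists_nonorthogonal_orbit_vector_quaternionic
    {G : Type*} [Group G] [Fintype G]
    {V : Type*} [AddCommGroup V] [Module ℝ V] [FiniteDimensional ℝ V]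
    (ρ : Representation ℝ G V) (hρ : IsIrreducibleRep ρ)
    (hquat : ∃ φ ψ : V →ₗ[ℝ] V,
      (∀ (g : G) (v : V), φ (ρ g v) = ρ g (φ v)) ∧
      (∀ (g : G) (v : V), ψ (ρ g v) = ρ g (ψ v)) ∧
      φ ∘ₗ ψ ≠ ψ ∘ₗ φ)
    {W : Type*} [AddCommGroup W] [Module ℝ W]
    (σ : Representation ℝ G W)
    (ℓ : ℕ) (hℓ : 0 < ℓ) (e : (Fin ℓ → V) ≃ₗ[ℝ] W)
    (he : ∀ (g : G) (v : Fin ℓ → V), e (fun j => ρ g (v j)) = σ g (e v))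
    (B : LinearMap.BilinForm ℝ W)
    (hBalt : ∀ w : W, B w w = 0)
    (hBnd : ∀ w : W, (∀ w' : W, B w w' = 0) → w = 0)
    (hBinv : ∀ (g : G) (w w' : W), B (σ g w) (σ g w') = B w w') :
    ∃ v : W, v ≠ 0 ∧ ∃ g : G, B v (σ g v) ≠ 0 :=
  exists_nonorthogonal_orbit_vector_quaternionic_general ρ hρ hquat σ ℓ hℓ e he B hBalt hBnd hBinv
end

section
/- Let G be a finite group and let W be a real G-module that is isotypic of quaternionic type, i.e. W is a direct sum of ℓ copies of a single irreducible real G-module V whose ring of G-equivariant ℝ-linear endomorphisms is noncommutative (isomorphic to the quaternions ℍ). Let B be a G-invariant nondegenerate alternating ℝ-bilinear form on W. Then W can be written as an internal direct sum W = V₁ ⊕ … ⊕ V_ℓ of irreducible G-submodules that are pairwise orthogonal with respect to B; moreover the restriction of B to each V_i is nondegenerate. -/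
/-!
Call `W` isotypic if it is spanned by the images of equivariant maps `V → W`. The heart of the
matter (the paper's Lemma 3.19) is that an invariant form `B` cannot vanish on every copy `f(V)`
unless it vanishes identically. Indeed, if it does, polarisation gives
`B (f v) (g v') = -B (g v) (f v')` for equivariant `f, g`, which makes every equivariant
endomorphism `T` of `V` self-adjoint for `β v v' = B (f v) (g v')`. Adjunction reverses
products, so `β` pairs trivially with the image of `φψ - ψφ`, which is all of `V` by Schur: the
quaternionic structure forces `β = 0`. By irreducibility, `B` is then nondegenerate on a copy
where it is nonzero.

Copies of `V` that are pairwise orthogonal and on which `B` is nondegenerate are produced one at a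
time, each inside the orthogonal complement of the previous ones; that complement is again
isotypic, being the image of an equivariant projection. Orthogonality and nondegeneracy make the
copies independent, and counting dimensions shows that `ℓ` of them fill `W`.
-/

section

open Representation LinearMap.BilinForm Module

variable {k G V W : Type*} [Field k] [Group G] [AddCommGroup V] [Module k V]
  [AddCommGroup W] [Module k W] {ρ : Representation k G V} {σ : Representation k G W}

theorem IsIrreducibleRep.surjective_of_ne_zero [FiniteDimensional k V] (hρ : IsIrreducibleRep ρ)
    {T : IntertwiningMap ρ ρ} (hT : T ≠ 0) : Function.Surjective T := by
  rcases hρ.2 (LinearMap.ker T.toLinearMap) fun g _ hv => T.ker.apply_mem_toSubmodule g hv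
    with h | h
  · exact LinearMap.injective_iff_surjective.mp (LinearMap.ker_eq_bot.mp h)
  · exact absurd (IntertwiningMap.ext (LinearMap.ker_eq_top.mp h)) hT

theorem IsIrreducibleRep.bilinForm_eq_zero_of_selfAdjoint [FiniteDimensional k V]
    (hρ : IsIrreducibleRep ρ) {φ ψ : IntertwiningMap ρ ρ} (hφψ : φ.comp ψ ≠ ψ.comp φ)
    {β : LinearMap.BilinForm k V}
    (hβ : ∀ (T : IntertwiningMap ρ ρ) (v v' : V), β v (T v') = β (T v) v') : β = 0 := by
  ext v w
  obtain ⟨w, rfl⟩ := hρ.surjective_of_ne_zero (sub_ne_zero.mpr hφψ) w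
  have hcomm : β v (φ (ψ w)) = β v (ψ (φ w)) := by
    rw [hβ φ, hβ ψ]
    exact (hβ (ψ.comp φ) v w).symm
  simp [hcomm]

theorem IsIrreducibleRep.compl₁₂_eq_zero [FiniteDimensional k V] (hρ : IsIrreducibleRep ρ)
    {φ ψ : IntertwiningMap ρ ρ} (hφψ : φ.comp ψ ≠ ψ.comp φ) {B : LinearMap.BilinForm k W}
    (hB : ∀ f : IntertwiningMap ρ σ, B.compl₁₂ f.toLinearMap f.toLinearMap = 0)
    (f g : IntertwiningMap ρ σ) : B.compl₁₂ f.toLinearMap g.toLinearMap = 0 := by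
  have hanti : ∀ (f g : IntertwiningMap ρ σ) (v v' : V), B (f v) (g v') = -B (g v) (f v') := by
    intro f g v v'
    have hfg := congr($(hB (f + g)) v v')
    have hf := congr($(hB f) v v')
    have hg := congr($(hB g) v v')
    simp only [LinearMap.compl₁₂_apply, IntertwiningMap.coe_toLinearMap,
      IntertwiningMap.coe_add, Pi.add_apply, map_add, LinearMap.add_apply,
      LinearMap.zero_apply] at hfg hf hg
    linear_combination hfg - hf - hg
  refine hρ.bilinForm_eq_zero_of_selfAdjoint hφψ fun T v v' => ?_
  simp only [LinearMap.compl₁₂_apply, IntertwiningMap.coe_toLinearMap]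
  rw [hanti f g (T v)]
  exact hanti f (g.comp T) v v'

def IsIsotypicRep (ρ : Representation k G V) (σ : Representation k G W) : Prop :=
  ⨆ f : IntertwiningMap ρ σ, LinearMap.range f.toLinearMap = ⊤

theorem isIsotypicRep_of_linearEquiv {ι : Type*} [Finite ι] (e : (ι → V) ≃ₗ[k] W)
    (he : ∀ (g : G) (v : ι → V), e (fun j => ρ g (v j)) = σ g (e v)) : IsIsotypicRep ρ σ := by
  classical
  cases nonempty_fintype ι
  let f (j : ι) : IntertwiningMap ρ σ :=
    (e.toLinearMap ∘ₗ LinearMap.single k (fun _ => V) j).intertwiningMap_of_isIntertwiningMap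
      ρ σ fun g v => by
        simp only [LinearMap.comp_apply, LinearMap.coe_single, LinearEquiv.coe_coe, ← he,
          Pi.apply_single (fun _ => ρ g) (fun _ => map_zero _)]
  refine eq_top_iff.mpr fun w _ => ?_
  obtain ⟨x, rfl⟩ := e.surjective w
  rw [← Finset.univ_sum_single x, map_sum]
  exact Submodule.sum_mem _ fun j _ => Submodule.mem_iSup_of_mem (f j) ⟨x j, rfl⟩

theorem IsIsotypicRep.bilinForm_eq_zero [FiniteDimensional k V] (hσ : IsIsotypicRep ρ σ)
    (hρ : IsIrreducibleRep ρ) {φ ψ : IntertwiningMap ρ ρ} (hφψ : φ.comp ψ ≠ ψ.comp φ)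
    {B : LinearMap.BilinForm k W}
    (hB : ∀ f : IntertwiningMap ρ σ, B.compl₁₂ f.toLinearMap f.toLinearMap = 0) : B = 0 := by
  have hspan : Submodule.span k (⋃ f : IntertwiningMap ρ σ, Set.range f) = ⊤ := by
    rw [← hσ, Submodule.iSup_eq_span]
    simp [LinearMap.coe_range]
  refine LinearMap.ext_on hspan fun w hw => LinearMap.ext_on hspan fun w' hw' => ?_
  obtain ⟨f, v, rfl⟩ := Set.mem_iUnion.mp hw
  obtain ⟨g, v', rfl⟩ := Set.mem_iUnion.mp hw'
  exact congr($(hρ.compl₁₂_eq_zero hφψ hB f g) v v')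

theorem Submodule.projection_apply_rep {P Q : Submodule k W} (h : IsCompl Q P)
    (hQ : ∀ g : G, ∀ w ∈ Q, σ g w ∈ Q) (hP : ∀ g : G, ∀ w ∈ P, σ g w ∈ P) (g : G) (w : W) :
    Q.projection P h (σ g w) = σ g (Q.projection P h w) := by
  conv_lhs => rw [← Q.projection_add_projection_eq_self h w]
  rw [map_add, map_add, projection_apply_of_mem_left h (hQ g _ (projection_apply_mem h w)),
    projection_apply_of_mem_right h (hP g _ (projection_apply_mem h.symm w)), add_zero]

theorem exists_intertwiningMap_compl₁₂_ne_zero [FiniteDimensional k V]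
    (hρ : IsIrreducibleRep ρ) {φ ψ : IntertwiningMap ρ ρ} (hφψ : φ.comp ψ ≠ ψ.comp φ)
    (hσ : IsIsotypicRep ρ σ) {B : LinearMap.BilinForm k W} {P Q : Submodule k W}
    (h : IsCompl Q P) (hQ : ∀ g : G, ∀ w ∈ Q, σ g w ∈ Q) (hP : ∀ g : G, ∀ w ∈ P, σ g w ∈ P)
    (hQB : Disjoint Q (B.orthogonal Q)) (hQbot : Q ≠ ⊥) :
    ∃ f : IntertwiningMap ρ σ, (∀ v, f v ∈ Q) ∧ B.compl₁₂ f.toLinearMap f.toLinearMap ≠ 0 := by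
  let π : IntertwiningMap σ σ := (Q.projection P h).intertwiningMap_of_isIntertwiningMap σ σ
    (Submodule.projection_apply_rep h hQ hP)
  by_contra! hzero
  have hπ : B.compl₁₂ π.toLinearMap π.toLinearMap = 0 := hσ.bilinForm_eq_zero hρ hφψ fun f =>
    hzero (π.comp f) fun v => Submodule.projection_apply_mem h _
  have hQQ : Q ≤ B.orthogonal Q := fun q hq n hn => by
    simpa [π, Submodule.projection_apply_of_mem_left h hq,
      Submodule.projection_apply_of_mem_left h hn] using congr($hπ n q)
  exact hQbot (disjoint_self.mp (Disjoint.mono_right hQQ hQB))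

theorem IsIrreducibleRep.ker_compl₁₂_eq_bot (hρ : IsIrreducibleRep ρ)
    {B : LinearMap.BilinForm k W} (hBinv : ∀ (g : G) (w w' : W), B (σ g w) (σ g w') = B w w')
    (f : IntertwiningMap ρ σ) (hf : B.compl₁₂ f.toLinearMap f.toLinearMap ≠ 0) :
    LinearMap.ker (B.compl₁₂ f.toLinearMap f.toLinearMap) = ⊥ := by
  refine (hρ.2 _ fun g v hv => ?_).resolve_right fun htop => hf (LinearMap.ker_eq_top.mp htop)
  rw [LinearMap.mem_ker] at hv ⊢
  ext v'
  calc B (f (ρ g v)) (f v') = B (σ g (f v)) (σ g (f (ρ g⁻¹ v'))) := by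
        rw [f.isIntertwining, f.isIntertwining, self_inv_apply]
    _ = 0 := by rw [hBinv]; exact congr($hv (ρ g⁻¹ v'))

structure IsNondegenerateCopy (ρ : Representation k G V) (σ : Representation k G W)
    (B : LinearMap.BilinForm k W) (U : Submodule k W) : Prop where
  exists_range_eq : ∃ f : IntertwiningMap ρ σ,
    Function.Injective f ∧ LinearMap.range f.toLinearMap = U
  disjoint_orthogonal : Disjoint U (B.orthogonal U)

theorem isNondegenerateCopy_range {B : LinearMap.BilinForm k W} (hB : B.IsRefl)
    (f : IntertwiningMap ρ σ) (hf : LinearMap.ker (B.compl₁₂ f.toLinearMap f.toLinearMap) = ⊥) :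
    IsNondegenerateCopy ρ σ B (LinearMap.range f.toLinearMap) := by
  have hsep : ∀ v, (∀ v', B (f v) (f v') = 0) → v = 0 := fun v hv =>
    (Submodule.mem_bot k).mp (hf ▸ LinearMap.mem_ker.mpr (LinearMap.ext hv))
  refine ⟨⟨f, fun v v' hvv' => sub_eq_zero.mp (hsep _ fun v'' => ?_), rfl⟩, ?_⟩
  · simp [hvv']
  · rw [Submodule.disjoint_def]
    rintro _ ⟨v, rfl⟩ hv
    rw [hsep v fun v' => hB _ _ (hv _ ⟨v', rfl⟩), map_zero]

namespace IsNondegenerateCopy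

variable {B : LinearMap.BilinForm k W} {U : Submodule k W}

theorem apply_mem (hU : IsNondegenerateCopy ρ σ B U) (g : G) : ∀ w ∈ U, σ g w ∈ U := by
  obtain ⟨f, -, rfl⟩ := hU.exists_range_eq
  exact fun _ hw => f.range.apply_mem_toSubmodule g hw

theorem finrank_eq (hU : IsNondegenerateCopy ρ σ B U) : finrank k U = finrank k V := by
  obtain ⟨f, hf, rfl⟩ := hU.exists_range_eq
  exact LinearMap.finrank_range_of_inj hf

theorem isIrreducible (hU : IsNondegenerateCopy ρ σ B U) (hρ : IsIrreducibleRep ρ) :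
    U ≠ ⊥ ∧ ∀ U' : Submodule k W, U' ≤ U → (∀ g : G, ∀ w ∈ U', σ g w ∈ U') →
      U' = ⊥ ∨ U' = U := by
  obtain ⟨f, hf, rfl⟩ := hU.exists_range_eq
  have := hρ.1
  refine ⟨fun h => ?_, fun U' hU' hinv => ?_⟩
  · obtain ⟨v, hv⟩ := exists_ne (0 : V)
    exact hv (hf (by rw [map_zero]; exact LinearMap.congr_fun (LinearMap.range_eq_bot.mp h) v))
  · rw [← Submodule.map_comap_eq_self hU']
    rcases hρ.2 (U'.comap f.toLinearMap) fun g v hv => by simpa [f.isIntertwining] using hinv g _ hv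
      with h | h
    · exact .inl (by rw [h, Submodule.map_bot])
    · exact .inr (by rw [h, ← LinearMap.range_eq_map])

theorem eq_zero_of_forall (hU : IsNondegenerateCopy ρ σ B U) (hB : B.IsRefl) {u : W} (hu : u ∈ U)
    (h : ∀ u' ∈ U, B u u' = 0) : u = 0 :=
  Submodule.disjoint_def.mp hU.disjoint_orthogonal u hu fun u' hu' => hB _ _ (h u' hu')

end IsNondegenerateCopy

theorem pairwise_snoc {α : Type*} {r : α → α → Prop} (hr : ∀ a b, r a b → r b a) {m : ℕ}
    {f : Fin m → α} {a : α} (hf : Pairwise fun i j => r (f i) (f j)) (ha : ∀ i, r (f i) a) :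
    Pairwise fun i j =>
      r (Fin.snoc (α := fun _ => α) f a i) (Fin.snoc (α := fun _ => α) f a j) := by
  intro i j hij
  induction i using Fin.lastCases <;> induction j using Fin.lastCases
  · exact absurd rfl hij
  · simpa using hr _ _ (ha _)
  · simpa using ha _
  · simpa using hf (ne_of_apply_ne Fin.castSucc hij)

theorem iSupIndep.finrank_iSup [FiniteDimensional k W] {ι : Type*} [Fintype ι]
    {U : ι → Submodule k W} (hU : iSupIndep U) : finrank k ↥(⨆ i, U i) = ∑ i, finrank k (U i) := by
  classical
  rw [← DirectSum.range_coeLinearMap,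
    LinearMap.finrank_range_of_inj (f := DirectSum.coeLinearMap U) hU.dfinsupp_lsum_injective,
    Module.finrank_directSum]

section OrthogonalFamily

variable {ι : Type*} {B : LinearMap.BilinForm k W} {U : ι → Submodule k W}

theorem iSupIndep_of_pairwise_le_orthogonal
    (horth : Pairwise fun i j => U i ≤ B.orthogonal (U j))
    (hU : ∀ i, Disjoint (U i) (B.orthogonal (U i))) : iSupIndep U :=
  fun i => (hU i).mono_right (iSup₂_le fun _ hji => horth hji)

theorem disjoint_iSup_orthogonal_iSup (horth : Pairwise fun i j => U i ≤ B.orthogonal (U j))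
    (hU : ∀ i, Disjoint (U i) (B.orthogonal (U i))) :
    Disjoint (⨆ i, U i) (B.orthogonal (⨆ i, U i)) := by
  rw [Submodule.disjoint_def]
  intro x hx hxo
  obtain ⟨c, hcU, rfl⟩ := (Submodule.mem_iSup_iff_exists_finsupp U x).mp hx
  have hc : ∀ j, c j = 0 := fun j => Submodule.disjoint_def.mp (hU j) _ (hcU j) fun n hn => by
    have h := hxo n (Submodule.mem_iSup_of_mem j hn)
    rwa [map_finsuppSum, Finsupp.sum_eq_single j
      (fun i _ hij => horth hij (hcU i) n hn) (by simp)] at h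
  simp [Finsupp.sum, hc]

end OrthogonalFamily

theorem rep_apply_mem_orthogonal {B : LinearMap.BilinForm k W}
    (hBinv : ∀ (g : G) (w w' : W), B (σ g w) (σ g w') = B w w') {P : Submodule k W}
    (hP : ∀ g : G, ∀ w ∈ P, σ g w ∈ P) (g : G) : ∀ w ∈ B.orthogonal P, σ g w ∈ B.orthogonal P :=
  fun w hw n hn => by
    rw [← self_inv_apply σ g n]
    exact (hBinv g _ w).trans (hw _ (hP g⁻¹ n hn))

theorem finrank_iSup_of_isNondegenerateCopy [FiniteDimensional k W]
    {B : LinearMap.BilinForm k W} {ι : Type*} [Fintype ι] {U : ι → Submodule k W}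
    (hU : ∀ i, IsNondegenerateCopy ρ σ B (U i))
    (horth : Pairwise fun i j => U i ≤ B.orthogonal (U j)) :
    finrank k ↥(⨆ i, U i) = Fintype.card ι * finrank k V := by
  rw [(iSupIndep_of_pairwise_le_orthogonal horth fun i => (hU i).disjoint_orthogonal).finrank_iSup]
  simp [(hU _).finrank_eq]

section Splitting

variable [FiniteDimensional k V] [FiniteDimensional k W] {φ ψ : IntertwiningMap ρ ρ}
  {B : LinearMap.BilinForm k W}

theorem exists_isNondegenerateCopy_le_orthogonal (hρ : IsIrreducibleRep ρ)
    (hφψ : φ.comp ψ ≠ ψ.comp φ) (hσ : IsIsotypicRep ρ σ) (hBalt : B.IsAlt)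
    (hBnd : B.Nondegenerate) (hBinv : ∀ (g : G) (w w' : W), B (σ g w) (σ g w') = B w w')
    {P : Submodule k W} (hP : ∀ g : G, ∀ w ∈ P, σ g w ∈ P) (hPB : Disjoint P (B.orthogonal P))
    (hPtop : P ≠ ⊤) : ∃ N, IsNondegenerateCopy ρ σ B N ∧ N ≤ B.orthogonal P := by
  have hcompl : IsCompl P (B.orthogonal P) :=
    (isCompl_orthogonal_iff_disjoint hBalt.isRefl).mpr hPB
  have hQB : Disjoint (B.orthogonal P) (B.orthogonal (B.orthogonal P)) := by
    rw [orthogonal_orthogonal hBnd hBalt.isRefl]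
    exact hPB.symm
  obtain ⟨f, hfQ, hf⟩ := exists_intertwiningMap_compl₁₂_ne_zero hρ hφψ hσ hcompl.symm
    (rep_apply_mem_orthogonal hBinv hP) hP hQB fun h => hPtop (eq_top_of_isCompl_bot (h ▸ hcompl))
  exact ⟨_, isNondegenerateCopy_range hBalt.isRefl f (hρ.ker_compl₁₂_eq_bot hBinv f hf),
    by rintro _ ⟨v, rfl⟩; exact hfQ v⟩

theorem exists_pairwise_orthogonal_isNondegenerateCopy (hρ : IsIrreducibleRep ρ)
    (hφψ : φ.comp ψ ≠ ψ.comp φ) (hσ : IsIsotypicRep ρ σ) (hBalt : B.IsAlt)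
    (hBnd : B.Nondegenerate) (hBinv : ∀ (g : G) (w w' : W), B (σ g w) (σ g w') = B w w')
    {ℓ : ℕ} (hW : finrank k W = ℓ * finrank k V) :
    ∃ U : Fin ℓ → Submodule k W, (∀ i, IsNondegenerateCopy ρ σ B (U i)) ∧
      Pairwise fun i j => U i ≤ B.orthogonal (U j) := by
  have := hρ.1
  suffices ∀ m ≤ ℓ, ∃ U : Fin m → Submodule k W, (∀ i, IsNondegenerateCopy ρ σ B (U i)) ∧
      Pairwise fun i j => U i ≤ B.orthogonal (U j) from this ℓ le_rfl
  intro m hm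
  induction m with
  | zero => exact ⟨finZeroElim, finZeroElim, fun i => i.elim0⟩
  | succ m ih =>
    obtain ⟨U, hU, horth⟩ := ih (by omega)
    have hPtop : ⨆ i, U i ≠ ⊤ := fun h => by
      have hdim := finrank_iSup_of_isNondegenerateCopy hU horth
      rw [h, finrank_top, hW, Fintype.card_fin] at hdim
      have := Nat.eq_of_mul_eq_mul_right finrank_pos hdim
      omega
    have hPinv : ∀ g : G, ∀ w ∈ ⨆ i, U i, σ g w ∈ ⨆ i, U i := fun g =>
      iSup_le fun i => (show U i ≤ (U i).comap (σ g) from (hU i).apply_mem g).trans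
        (Submodule.comap_mono (le_iSup U i))
    obtain ⟨N, hN, hNP⟩ := exists_isNondegenerateCopy_le_orthogonal hρ hφψ hσ hBalt hBnd hBinv
      hPinv (disjoint_iSup_orthogonal_iSup horth fun i => (hU i).disjoint_orthogonal) hPtop
    have hsymm : ∀ U U' : Submodule k W, U ≤ B.orthogonal U' → U' ≤ B.orthogonal U :=
      fun _ _ h => (le_orthogonal_orthogonal hBalt.isRefl).trans (orthogonal_le h)
    refine ⟨Fin.snoc U N, Fin.lastCases (by simpa using hN) fun i => by simpa using hU i,
      pairwise_snoc hsymm horth fun i => hsymm _ _ (hNP.trans (orthogonal_le (le_iSup U i)))⟩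

end Splitting

end

theorem orthogonal_splitting_quaternionic_isotypic_general
    {G : Type*} [Group G]
    {V : Type*} [AddCommGroup V] [Module ℝ V] [FiniteDimensional ℝ V]
    (ρ : Representation ℝ G V) (hρ : IsIrreducibleRep ρ)
    (hquat : ∃ φ ψ : V →ₗ[ℝ] V,
      (∀ (g : G) (v : V), φ (ρ g v) = ρ g (φ v)) ∧
      (∀ (g : G) (v : V), ψ (ρ g v) = ρ g (ψ v)) ∧
      φ ∘ₗ ψ ≠ ψ ∘ₗ φ)
    {W : Type*} [AddCommGroup W] [Module ℝ W]
    (σ : Representation ℝ G W)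
    (ℓ : ℕ) (e : (Fin ℓ → V) ≃ₗ[ℝ] W)
    (he : ∀ (g : G) (v : Fin ℓ → V), e (fun j => ρ g (v j)) = σ g (e v))
    (B : LinearMap.BilinForm ℝ W)
    (hBalt : ∀ w : W, B w w = 0)
    (hBnd : ∀ w : W, (∀ w' : W, B w w' = 0) → w = 0)
    (hBinv : ∀ (g : G) (w w' : W), B (σ g w) (σ g w') = B w w') :
    ∃ U : Fin ℓ → Submodule ℝ W,
      -- each `U i` is a `G`-submodule
      (∀ (i : Fin ℓ) (g : G), ∀ w ∈ U i, σ g w ∈ U i) ∧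
      -- each `U i` is irreducible
      (∀ i : Fin ℓ, U i ≠ ⊥ ∧
        ∀ U' : Submodule ℝ W, U' ≤ U i → (∀ g : G, ∀ w ∈ U', σ g w ∈ U') →
          U' = ⊥ ∨ U' = U i) ∧
      -- `W` is their internal direct sum
      DirectSum.IsInternal U ∧
      -- pairwise `B`-orthogonal
      (∀ i j : Fin ℓ, i ≠ j → ∀ u ∈ U i, ∀ u' ∈ U j, B u u' = 0) ∧
      -- the restriction of `B` to each `U i` is nondegenerate
      (∀ i : Fin ℓ, ∀ u ∈ U i, (∀ u' ∈ U i, B u u' = 0) → u = 0) := by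
  obtain ⟨φ, ψ, hφ, hψ, hφψ⟩ := hquat
  have : FiniteDimensional ℝ W := .equiv e
  have hB : B.IsAlt := hBalt
  have hW : Module.finrank ℝ W = ℓ * Module.finrank ℝ V := by
    rw [← e.finrank_eq, Module.finrank_pi_fintype, Finset.sum_const, Finset.card_univ,
      Fintype.card_fin, smul_eq_mul]
  obtain ⟨U, hU, horth⟩ := exists_pairwise_orthogonal_isNondegenerateCopy hρ
    (φ := φ.intertwiningMap_of_isIntertwiningMap ρ ρ hφ)
    (ψ := ψ.intertwiningMap_of_isIntertwiningMap ρ ρ hψ) (fun h => hφψ congr(($h).toLinearMap))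
    (isIsotypicRep_of_linearEquiv e he) hB (hB.isRefl.nondegenerate_iff_separatingLeft.mpr hBnd)
    hBinv hW
  have hUtop : ⨆ i, U i = ⊤ := Submodule.eq_top_of_finrank_eq (by
    rw [finrank_iSup_of_isNondegenerateCopy hU horth, hW, Fintype.card_fin])
  exact ⟨U, fun i => (hU i).apply_mem, fun i => (hU i).isIrreducible hρ,
    DirectSum.isInternal_submodule_of_iSupIndep_of_iSup_eq_top
      (iSupIndep_of_pairwise_le_orthogonal horth fun i => (hU i).disjoint_orthogonal) hUtop,
    fun i j hij u hu u' hu' => horth hij.symm hu' u hu,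
    fun i u hu => (hU i).eq_zero_of_forall hB.isRefl hu⟩

/-- **Orthogonal splitting of a quaternionic isotypic module with respect to an
invariant symplectic form** (Matheus–Yoccoz–Zmiaikou, Lemma 3.20). Let `G` be a
finite group and `W` a real `G`-module which is isotypic of quaternionic type: `W`
is a direct sum of `ℓ` copies of an irreducible real `G`-module `V` whose ring of
equivariant endomorphisms is noncommutative. Let `B` be a `G`-invariant
nondegenerate alternating bilinear form on `W`. Then `W` is the internal direct sum
of `ℓ` irreducible `G`-submodules which are pairwise `B`-orthogonal; moreover the
restriction of `B` to each of them is nondegenerate. -/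
theorem orthogonal_splitting_quaternionic_isotypic
    {G : Type*} [Group G] [Fintype G]
    {V : Type*} [AddCommGroup V] [Module ℝ V] [FiniteDimensional ℝ V]
    (ρ : Representation ℝ G V) (hρ : IsIrreducibleRep ρ)
    (hquat : ∃ φ ψ : V →ₗ[ℝ] V,
      (∀ (g : G) (v : V), φ (ρ g v) = ρ g (φ v)) ∧
      (∀ (g : G) (v : V), ψ (ρ g v) = ρ g (ψ v)) ∧
      φ ∘ₗ ψ ≠ ψ ∘ₗ φ)
    {W : Type*} [AddCommGroup W] [Module ℝ W]
    (σ : Representation ℝ G W)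
    (ℓ : ℕ) (e : (Fin ℓ → V) ≃ₗ[ℝ] W)
    (he : ∀ (g : G) (v : Fin ℓ → V), e (fun j => ρ g (v j)) = σ g (e v))
    (B : LinearMap.BilinForm ℝ W)
    (hBalt : ∀ w : W, B w w = 0)
    (hBnd : ∀ w : W, (∀ w' : W, B w w' = 0) → w = 0)
    (hBinv : ∀ (g : G) (w w' : W), B (σ g w) (σ g w') = B w w') :
    ∃ U : Fin ℓ → Submodule ℝ W,
      -- each `U i` is a `G`-submodule
      (∀ (i : Fin ℓ) (g : G), ∀ w ∈ U i, σ g w ∈ U i) ∧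
      -- each `U i` is irreducible
      (∀ i : Fin ℓ, U i ≠ ⊥ ∧
        ∀ U' : Submodule ℝ W, U' ≤ U i → (∀ g : G, ∀ w ∈ U', σ g w ∈ U') →
          U' = ⊥ ∨ U' = U i) ∧
      -- `W` is their internal direct sum
      DirectSum.IsInternal U ∧
      -- pairwise `B`-orthogonal
      (∀ i j : Fin ℓ, i ≠ j → ∀ u ∈ U i, ∀ u' ∈ U j, B u u' = 0) ∧
      -- the restriction of `B` to each `U i` is nondegenerate
      (∀ i : Fin ℓ, ∀ u ∈ U i, (∀ u' ∈ U i, B u u' = 0) → u = 0) :=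
  orthogonal_splitting_quaternionic_isotypic_general ρ hρ hquat σ ℓ e he B hBalt hBnd hBinv
end

section
/- Let n ≥ 2 be an integer. Let G be the subgroup of the symmetric group on {1, …, 2n} consisting of all permutations that respect the partition of {1, …, 2n} into the set E of even numbers and the set O of odd numbers (each of E, O is mapped onto E or onto O). Let g_r be the 2n-cycle (1, 2, …, 2n), let g_u be the transposition (2 4), let N = {g ∈ G : g(E) = E}, and let H = {g ∈ N : g fixes every element of E}. Then: (i) g_r and g_u generate G; (ii) H ∩ g_r H g_r⁻¹ = {id}; (iii) N is the normalizer of H in G, and N/H is isomorphic to the symmetric group S_n; (iv) N is a normal subgroup of G of index 2. -/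
/-- The group `G` of permutations of `{1, …, 2n}` (encoded as `Fin (2*n)`, with
index `k` corresponding to the number `k+1`) which respect the partition into even
and odd numbers; an index `x` corresponds to an even number iff `x.val % 2 = 1`. -/
def parityGroup (n : ℕ) : Subgroup (Equiv.Perm (Fin (2 * n))) where
  carrier := {g | ∀ x y : Fin (2 * n),
    (g x).val % 2 = (g y).val % 2 ↔ x.val % 2 = y.val % 2}
  one_mem' := by intro x y; simp
  mul_mem' := by
    intro a b ha hb x y
    simpa only [Equiv.Perm.mul_apply] using (ha (b x) (b y)).trans (hb x y)
  inv_mem' := by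
    intro a ha x y
    simpa only [Equiv.Perm.coe_inv, Equiv.apply_symm_apply] using (ha (a⁻¹ x) (a⁻¹ y)).symm

/-- The subgroup `N = {g ∈ G : g(E) = E}` of permutations preserving the set `E`
of (indices of) even numbers, i.e. preserving the parity of every index. -/
def evenStab (n : ℕ) : Subgroup (Equiv.Perm (Fin (2 * n))) where
  carrier := {g | ∀ x : Fin (2 * n), (g x).val % 2 = x.val % 2}
  one_mem' := by intro x; simp
  mul_mem' := by
    intro a b ha hb x
    simp only [Equiv.Perm.mul_apply]
    rw [ha (b x), hb x]
  inv_mem' := by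
    intro a ha x
    have h := ha (a⁻¹ x)
    simp only [Equiv.Perm.coe_inv, Equiv.apply_symm_apply] at h
    exact h.symm

/-- The subgroup `H = {g ∈ N : g|_E = id}` of permutations fixing every (index of
an) even number. -/
def evenFixer (n : ℕ) : Subgroup (Equiv.Perm (Fin (2 * n))) where
  carrier := {g | ∀ x : Fin (2 * n), x.val % 2 = 1 → g x = x}
  one_mem' := by intro x _; simp
  mul_mem' := by
    intro a b ha hb x hx
    simp only [Equiv.Perm.mul_apply]
    rw [hb x hx, ha x hx]
  inv_mem' := by
    intro a ha x hx
    have h := ha x hx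
    calc a⁻¹ x = a⁻¹ (a x) := by rw [h]
    _ = x := by simp only [Equiv.Perm.coe_inv, Equiv.symm_apply_apply]

/-!
`H` is the pointwise fixer and `N` the setwise stabilizer of the set `E` of even numbers in the
full symmetric group. For any set whose complement has at least two points, the normalizer of its
pointwise fixer is its setwise stabilizer (conjugating a transposition of two points outside `E`
by an element moving `E` off itself gives a transposition moving a point of `E`), and
restriction to `E` maps the stabilizer onto `Sym(E) ≅ S_n` with kernel the fixer: this is (iii).
Since `g_r` carries `E` onto its complement, `H ∩ g_r H g_r⁻¹` fixes every point, which is (ii).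
An element of `G` either preserves every parity or flips every parity, and `g_r` flips, so `N`
has index two in `G`: this is (iv). Finally, conjugating `(2 4)` by powers of `g_r` gives every
transposition `(a, a + 2)`, hence every transposition of two points of equal parity; these
generate `N`, and `N` together with `g_r` is `G`: this is (i).
-/

open Equiv MulAction Subgroup
open scoped Pointwise

namespace Equiv.Perm

variable {α : Type*}

theorem fixingSubgroup_univ : fixingSubgroup (Perm α) (_root_.Set.univ : Set α) = ⊥ := by
  ext g
  simp [mem_fixingSubgroup_iff, Perm.ext_iff]

theorem ker_toPermHom_stabilizer (s : Set α) :
    (toPermHom (stabilizer (Perm α) s) s).ker =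
      (fixingSubgroup (Perm α) s).subgroupOf (stabilizer (Perm α) s) := by
  ext g
  simp [Perm.ext_iff, Subtype.ext_iff, mem_subgroupOf, mem_fixingSubgroup_iff]

theorem stabilizer_le_normalizer_fixingSubgroup (s : Set α) :
    stabilizer (Perm α) s ≤ normalizer (fixingSubgroup (Perm α) s : Set (Perm α)) := by
  intro g hg
  rw [mem_stabilizer_iff] at hg
  have hg' : g⁻¹ • s = s := by rw [inv_smul_eq_iff, hg]
  refine mem_normalizer_iff.mpr fun h => ⟨fun hh => ?_, fun hh => ?_⟩
  · exact Set.conj_mem_fixingSubgroup hg hh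
  · simpa [MulAut.conj_apply, mul_assoc] using Set.conj_mem_fixingSubgroup hg' hh

variable [DecidableEq α]

theorem apply_mem_of_mem_normalizer_fixingSubgroup {s : Set α} (hs : sᶜ.Nontrivial)
    {g : Perm α} (hg : g ∈ normalizer (fixingSubgroup (Perm α) s : Set (Perm α)))
    {x : α} (hx : x ∈ s) : g x ∈ s := by
  by_contra hgx
  obtain ⟨z, hz, hzx⟩ := hs.exists_ne (g x)
  have hswap : swap (g x) z ∈ fixingSubgroup (Perm α) s :=
    (mem_fixingSubgroup_iff (Perm α)).mpr fun y hy =>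
      swap_apply_of_ne_of_ne (by rintro rfl; exact hgx hy) (by rintro rfl; exact hz hy)
  have hconj : g⁻¹ * swap (g x) z * g ∈ fixingSubgroup (Perm α) s := by
    simpa using (mem_normalizer_iff.mp (inv_mem hg) _).mp hswap
  have hfix : g⁻¹ z = x := by
    simpa using (mem_fixingSubgroup_iff (Perm α)).mp hconj x hx
  exact hzx (by simp [← hfix])

theorem normalizer_fixingSubgroup_eq_stabilizer {s : Set α} (hs : sᶜ.Nontrivial) :
    normalizer (fixingSubgroup (Perm α) s : Set (Perm α)) = stabilizer (Perm α) s := by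
  refine le_antisymm (fun g hg => mem_stabilizer_set.mpr fun x => ⟨fun hgx => ?_, fun hx =>
    apply_mem_of_mem_normalizer_fixingSubgroup hs hg hx⟩)
    (stabilizer_le_normalizer_fixingSubgroup s)
  simpa using apply_mem_of_mem_normalizer_fixingSubgroup hs (inv_mem hg) hgx

theorem mem_of_forall_swap_mem {β : Type*} [Finite α] (f : α → β) {K : Subgroup (Perm α)}
    (hK : ∀ x y, f x = f y → swap x y ∈ K) {g : Perm α} (hg : ∀ x, f (g x) = f x) : g ∈ K := by
  let S : Set (Perm α) := {σ | ∃ x y, x ≠ y ∧ f x = f y ∧ σ = swap x y}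
  have hS : ∀ σ ∈ S, σ.IsSwap := by
    rintro σ ⟨x, y, hxy, -, rfl⟩
    exact ⟨x, y, hxy, rfl⟩
  have hgS : g ∈ closure S := by
    refine (mem_closure_isSwap hS).mpr ⟨Set.toFinite _, fun x => ?_⟩
    rcases eq_or_ne (g x) x with h | h
    · rw [h]; exact mem_orbit_self x
    · exact ⟨⟨swap x (g x), subset_closure ⟨x, g x, h.symm, (hg x).symm, rfl⟩⟩,
        swap_apply_left x (g x)⟩
  refine (closure_le K).mpr ?_ hgS
  rintro σ ⟨x, y, -, hxy, rfl⟩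
  exact hK x y hxy

end Equiv.Perm

theorem val_finRotate_apply {m : ℕ} (x : Fin m) : (finRotate m x).val = (x.val + 1) % m := by
  cases m with
  | zero => exact x.elim0
  | succ k => rw [finRotate_apply, Fin.val_add, Fin.val_one', Nat.add_mod_mod]

theorem val_finRotate_pow_apply {m : ℕ} (k : ℕ) (x : Fin m) :
    ((finRotate m ^ k) x).val = (x.val + k) % m := by
  induction k with
  | zero => simp [Nat.mod_eq_of_lt x.isLt]
  | succ k ih =>
    rw [pow_succ', Perm.mul_apply, val_finRotate_apply, ih, Nat.mod_add_mod, Nat.add_assoc]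

section Generation

variable {m : ℕ} {K : Subgroup (Perm (Fin m))}

theorem swap_mem_of_finRotate_mem (hr : finRotate m ∈ K) {a a' b b' : Fin m}
    (hu : swap a a' ∈ K) {d : ℕ} (ha : a'.val = a.val + d) (hb : b'.val = b.val + d) :
    swap b b' ∈ K := by
  set f := finRotate m ^ (b.val + m - a.val)
  have hfa : f a = b := Fin.ext <| by
    rw [val_finRotate_pow_apply, show a.val + (b.val + m - a.val) = b.val + m by omega,
      Nat.add_mod_right, Nat.mod_eq_of_lt b.isLt]
  have hfa' : f a' = b' := Fin.ext <| by
    rw [val_finRotate_pow_apply, show a'.val + (b.val + m - a.val) = b'.val + m by omega,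
      Nat.add_mod_right, Nat.mod_eq_of_lt b'.isLt]
  rw [← hfa, ← hfa', swap_apply_apply]
  exact mul_mem (mul_mem (pow_mem hr _) hu) (inv_mem (pow_mem hr _))

theorem swap_mem_of_val_eq_add_two_mul (hr : finRotate m ∈ K) {a a' : Fin m}
    (hu : swap a a' ∈ K) (ha : a'.val = a.val + 2) (k : ℕ) :
    ∀ {b c : Fin m}, c.val = b.val + 2 * (k + 1) → swap b c ∈ K := by
  induction k with
  | zero => exact fun hc => swap_mem_of_finRotate_mem hr hu ha hc
  | succ k ih =>
    intro b c hc
    let c' : Fin m := ⟨b.val + 2 * (k + 1), by omega⟩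
    have hc' : swap c' c ∈ K := swap_mem_of_finRotate_mem hr hu ha (by simp [c']; omega)
    have hb : swap c' c b = b := swap_apply_of_ne_of_ne
      (Fin.ne_of_val_ne (by simp [c'])) (Fin.ne_of_val_ne (by omega))
    have hconj := swap_apply_apply (swap c' c) b c'
    rw [hb, swap_apply_left] at hconj
    rw [hconj]
    exact mul_mem (mul_mem hc' (ih rfl)) (inv_mem hc')

theorem swap_mem_of_mod_two_eq (hr : finRotate m ∈ K) {a a' : Fin m} (hu : swap a a' ∈ K)
    (ha : a'.val = a.val + 2) {b c : Fin m} (hbc : b.val % 2 = c.val % 2) : swap b c ∈ K := by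
  rcases lt_trichotomy b.val c.val with h | h | h
  · exact swap_mem_of_val_eq_add_two_mul hr hu ha ((c.val - b.val) / 2 - 1) (by omega)
  · rw [Fin.ext h, swap_self, ← Perm.one_def]
    exact one_mem K
  · rw [swap_comm]
    exact swap_mem_of_val_eq_add_two_mul hr hu ha ((b.val - c.val) / 2 - 1) (by omega)

end Generation

section Parity

variable {n : ℕ}

theorem mod_two_finRotate_apply (x : Fin (2 * n)) :
    (finRotate (2 * n) x).val % 2 = (x.val + 1) % 2 := by
  rw [val_finRotate_apply, Nat.mod_mod_of_dvd _ (dvd_mul_right 2 n)]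

theorem finRotate_mem_parityGroup : finRotate (2 * n) ∈ parityGroup n := fun x y => by
  rw [mod_two_finRotate_apply, mod_two_finRotate_apply]
  omega

theorem evenStab_le_parityGroup : evenStab n ≤ parityGroup n := fun g hg x y => by
  rw [hg x, hg y]

theorem swap_mem_evenStab {a b : Fin (2 * n)} (hab : a.val % 2 = b.val % 2) :
    swap a b ∈ evenStab n := fun x => by
  rw [swap_apply_def]
  split_ifs <;> subst_vars <;> omega

theorem mem_evenStab_or_forall_mod_two_ne {g : Perm (Fin (2 * n))} (hg : g ∈ parityGroup n) :
    g ∈ evenStab n ∨ ∀ x, (g x).val % 2 ≠ x.val % 2 := by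
  by_cases h : ∃ x₀, (g x₀).val % 2 = x₀.val % 2
  · obtain ⟨x₀, hx₀⟩ := h
    refine Or.inl fun x => ?_
    have := hg x x₀
    omega
  · push Not at h
    exact Or.inr h

theorem mul_finRotate_mem_evenStab_iff (hn : 0 < n) {g : Perm (Fin (2 * n))}
    (hg : g ∈ parityGroup n) : g * finRotate (2 * n) ∈ evenStab n ↔ g ∉ evenStab n := by
  constructor
  · intro hgr hgN
    have := hgr ⟨0, by omega⟩
    rw [Perm.mul_apply, hgN, mod_two_finRotate_apply] at this
    simp at this
  · intro hgN x
    rw [Perm.mul_apply]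
    have := (mem_evenStab_or_forall_mod_two_ne hg).resolve_left hgN (finRotate (2 * n) x)
    rw [mod_two_finRotate_apply] at this
    omega

theorem relIndex_evenStab_parityGroup (hn : 0 < n) :
    (evenStab n).relIndex (parityGroup n) = 2 :=
  index_eq_two_iff.mpr ⟨⟨_, finRotate_mem_parityGroup⟩, fun g =>
    xor_iff_iff_not.mpr (mul_finRotate_mem_evenStab_iff hn g.2)⟩

theorem closure_finRotate_swap_eq_parityGroup {a a' : Fin (2 * n)}
    (ha : a'.val = a.val + 2) : closure {finRotate (2 * n), swap a a'} = parityGroup n := by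
  set K := closure {finRotate (2 * n), swap a a'}
  have hr : finRotate (2 * n) ∈ K := subset_closure (Set.mem_insert _ _)
  have hu : swap a a' ∈ K := subset_closure (Set.mem_insert_of_mem _ rfl)
  have hN : evenStab n ≤ K := fun g hg =>
    Perm.mem_of_forall_swap_mem (fun x : Fin (2 * n) => x.val % 2)
      (fun _ _ => swap_mem_of_mod_two_eq hr hu ha) hg
  refine le_antisymm ((closure_le _).mpr ?_) fun g hg => ?_
  · rintro g (rfl | rfl)
    exacts [finRotate_mem_parityGroup, evenStab_le_parityGroup (swap_mem_evenStab (by omega))]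
  by_cases hgN : g ∈ evenStab n
  · exact hN hgN
  · have hgr := hN ((mul_finRotate_mem_evenStab_iff (by have := a.isLt; omega) hg).mpr hgN)
    simpa using mul_mem hgr (inv_mem hr)

end Parity

/-- The indices of the even numbers `2, 4, …, 2n`. -/
def evenSet (n : ℕ) : Set (Fin (2 * n)) := {x | x.val % 2 = 1}

def finEquivEvenSet (n : ℕ) : Fin n ≃ evenSet n where
  toFun i := ⟨⟨2 * i.val + 1, by omega⟩, by simp [evenSet]⟩
  invFun x := ⟨x.val.val / 2, by have := x.val.isLt; omega⟩
  left_inv i := by ext; dsimp only; omega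
  right_inv x := by
    have := x.prop
    simp only [evenSet, Set.mem_ofPred_eq] at this
    ext; dsimp only; omega

section EvenSet

variable {n : ℕ}

theorem evenFixer_eq_fixingSubgroup :
    evenFixer n = fixingSubgroup (Perm (Fin (2 * n))) (evenSet n) := by
  ext g
  exact (mem_fixingSubgroup_iff (Perm (Fin (2 * n)))).symm

theorem evenStab_eq_stabilizer : evenStab n = stabilizer (Perm (Fin (2 * n))) (evenSet n) := by
  ext g
  rw [mem_stabilizer_set]
  refine ⟨fun hg x => by simp [evenSet, hg x], fun hg x => ?_⟩
  have := hg x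
  simp only [evenSet, Set.mem_ofPred_eq, Perm.smul_def] at this
  omega

theorem finRotate_smul_evenSet : finRotate (2 * n) • evenSet n = (evenSet n)ᶜ := by
  ext x
  obtain ⟨y, rfl⟩ := (finRotate (2 * n)).surjective x
  rw [Set.mem_smul_set_iff_inv_smul_mem, Perm.smul_def, Perm.coe_inv, symm_apply_apply]
  have := mod_two_finRotate_apply y
  simp only [evenSet, Set.mem_ofPred_eq, Set.mem_compl_iff]
  omega

theorem evenSet_compl_nontrivial (hn : 2 ≤ n) : (evenSet n)ᶜ.Nontrivial :=
  ⟨⟨0, by omega⟩, by simp [evenSet], ⟨2, by omega⟩, by simp [evenSet], by simp⟩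

theorem evenFixer_inf_map_conj_finRotate :
    evenFixer n ⊓ (evenFixer n).map (MulAut.conj (finRotate (2 * n))).toMonoidHom = ⊥ := by
  rw [evenFixer_eq_fixingSubgroup, ← SubMulAction.fixingSubgroup_smul_eq_fixingSubgroup_map_conj,
    finRotate_smul_evenSet, ← fixingSubgroup_union, Set.union_compl_self,
    Perm.fixingSubgroup_univ]

theorem exists_surjective_evenStab_hom_ker_eq :
    ∃ φ : evenStab n →* Perm (Fin n),
      Function.Surjective φ ∧ φ.ker = (evenFixer n).subgroupOf (evenStab n) := by
  rw [evenStab_eq_stabilizer, evenFixer_eq_fixingSubgroup]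
  refine ⟨(permCongrHom (finEquivEvenSet n).symm : _ →* _).comp (toPermHom _ (evenSet n)),
    (permCongrHom _).surjective.comp (Perm.stabilizer.surjective_toPerm _), ?_⟩
  rw [MonoidHom.ker_mulEquiv_comp, Perm.ker_toPermHom_stabilizer]

end EvenSet

/-- **The family of quasiregular origamis with automorphism group `S_n`**
(Matheus–Yoccoz–Zmiaikou, Proposition 5.1). For `n ≥ 2`, let `G` be the group of
permutations of `{1, …, 2n}` respecting the partition into even and odd numbers,
`g_r` the `2n`-cycle `(1, 2, …, 2n)`, `g_u` the transposition `(2 4)`,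
`N = {g ∈ G : g(E) = E}` and `H = {g ∈ N : g|_E = id}` (where `E` is the set of
even numbers). Then: (i) `g_r` and `g_u` generate `G`; (ii) `H ∩ g_r H g_r⁻¹ = 1`;
(iii) `N` is the normalizer of `H`, and `N/H ≅ S_n` (there is a surjective
homomorphism `N → S_n` with kernel `H`); (iv) `N` is a normal subgroup of `G` of
index `2`. -/
theorem quasiregular_origami_with_Sn_symmetry
    (n : ℕ) (hn : 2 ≤ n)
    (g_r : Equiv.Perm (Fin (2 * n))) (hg_r : g_r = finRotate (2 * n))
    (g_u : Equiv.Perm (Fin (2 * n)))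
    (hg_u : g_u = Equiv.swap (⟨1, by omega⟩ : Fin (2 * n)) (⟨3, by omega⟩ : Fin (2 * n))) :
    -- (i)
    Subgroup.closure {g_r, g_u} = parityGroup n ∧
    -- (ii)
    evenFixer n ⊓ (evenFixer n).map (MulAut.conj g_r).toMonoidHom = ⊥ ∧
    -- (iii)
    Subgroup.normalizer ((evenFixer n : Set (Equiv.Perm (Fin (2 * n))))) = evenStab n ∧
    (∃ φ : ↥(evenStab n) →* Equiv.Perm (Fin n),
      Function.Surjective φ ∧ φ.ker = (evenFixer n).subgroupOf (evenStab n)) ∧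
    -- (iv)
    evenStab n ≤ parityGroup n ∧
    ((evenStab n).subgroupOf (parityGroup n)).Normal ∧
    (evenStab n).relIndex (parityGroup n) = 2 := by
  subst hg_r hg_u
  have hindex := relIndex_evenStab_parityGroup (n := n) (by omega)
  refine ⟨closure_finRotate_swap_eq_parityGroup rfl, evenFixer_inf_map_conj_finRotate, ?_,
    exists_surjective_evenStab_hom_ker_eq, evenStab_le_parityGroup,
    normal_of_index_eq_two hindex, hindex⟩
  rw [evenFixer_eq_fixingSubgroup,
    Perm.normalizer_fixingSubgroup_eq_stabilizer (evenSet_compl_nontrivial hn),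
    evenStab_eq_stabilizer]
end
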